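/- arXiv:2304.07160 — 9 statements merged into one kernel-verified Lean document; each statement's English description precedes it below -/
import Mathlib

section
/- Let u = (u_1, …, u_n) be an update list in ℤ^d. For 1 ≤ m ≤ n define the lattice depth D(m) as the maximum, over all lattice paths γ for the list (u_1, …, u_m) starting at u_m, of the number of indices i with 1 ≤ i ≤ m−1 and γ(i) = u_i. Then for all 1 ≤ j < k ≤ n such that u_j − u_k ∈ N (i.e. the location of the earlier update u_j is a nearest neighbor of the location of u_k), one has D(j) < D(k). -/
open Classical MeasureTheory

noncomputable section

/-- The set `N` of nearest neighbors of the origin in `ℤ^d`. -/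
def nbr (d : ℕ) : Set (Fin d → ℤ) :=
  {v | ∃ i : Fin d, v = Pi.single i 1 ∨ v = Pi.single i (-1)}

/-- The set `N₀` of nearest neighbors of the origin, together with the origin. -/
def nbr0 (d : ℕ) : Set (Fin d → ℤ) := nbr d ∪ {0}

/-- One RSOS update at site `x`: the height at `x` increases by one iff it is
no larger than all neighboring heights. -/
def rsosStep {d : ℕ} (f : (Fin d → ℤ) → ℤ) (x : Fin d → ℤ) : (Fin d → ℤ) → ℤ :=
  fun y => if y = x ∧ ∀ e ∈ nbr d, f x ≤ f (x + e) then f x + 1 else f y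

/-- RSOS heights after applying the update list `u` (in chronological order)
to the initial condition `H`. -/
def RSOS {d : ℕ} (u : List (Fin d → ℤ)) (H : (Fin d → ℤ) → ℤ) : (Fin d → ℤ) → ℤ :=
  u.foldl rsosStep H

/-- A lattice path for the update list `u` starting at `x`:
`γ n = x` (where `n = u.length`) and for every `1 ≤ k ≤ n` (indexed here by `k+1`
with `k < n`), either the path stays, or the `k`-th update occurs at the path's
position and the path moves to a nearest neighbor (backwards in time). -/
def IsLatticePath {d : ℕ} (u : List (Fin d → ℤ)) (x : Fin d → ℤ) (γ : ℕ → (Fin d → ℤ)) : Prop :=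
  γ u.length = x ∧
    ∀ k < u.length, γ k = γ (k + 1) ∨ (γ (k + 1) = u.getD k 0 ∧ γ k - γ (k + 1) ∈ nbr d)

/-- The weight of a lattice path: the number of indices `1 ≤ j ≤ n` with `γ j = u_j`. -/
def pathWeight {d : ℕ} (u : List (Fin d → ℤ)) (γ : ℕ → (Fin d → ℤ)) : ℕ :=
  ((Finset.range u.length).filter fun k => γ (k + 1) = u.getD k 0).card

/-- The ℓ¹ norm on `ℤ^d`. -/
def l1 {d : ℕ} (v : Fin d → ℤ) : ℕ := ∑ i, (v i).natAbs

/-- The lattice depth `D(m)` of the `m`-th update: the maximum, over all lattice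
paths `γ` for the truncated list `(u_1, …, u_m)` starting at `u_m`, of the number
of indices `1 ≤ i ≤ m - 1` with `γ i = u_i`. -/
def latticeDepth {d : ℕ} (u : List (Fin d → ℤ)) (m : ℕ) : ℕ :=
  sSup {w : ℕ | ∃ γ : ℕ → (Fin d → ℤ), IsLatticePath (u.take m) (u.getD (m - 1) 0) γ ∧
    w = ((Finset.range (m - 1)).filter fun i => γ (i + 1) = u.getD i 0).card}

lemma getD_take' {d : ℕ} (u : List (Fin d → ℤ)) {m i : ℕ} (h : i < m) :
    (u.take m).getD i 0 = u.getD i 0 := by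
  simp [List.getD_eq_getElem?_getD, List.getElem?_take, h]

lemma depth_bdd {d : ℕ} (u : List (Fin d → ℤ)) (m : ℕ) :
    BddAbove {w : ℕ | ∃ γ : ℕ → (Fin d → ℤ), IsLatticePath (u.take m) (u.getD (m - 1) 0) γ ∧
      w = ((Finset.range (m - 1)).filter fun i => γ (i + 1) = u.getD i 0).card} := by
  refine ⟨m, fun w hw => ?_⟩
  obtain ⟨γ, -, rfl⟩ := hw
  calc ((Finset.range (m - 1)).filter fun i => γ (i + 1) = u.getD i 0).card
      ≤ (Finset.range (m - 1)).card := Finset.card_filter_le _ _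
    _ ≤ m := by rw [Finset.card_range]; omega

/-- if `1 ≤ j < k ≤ n` and the location of the earlier update `u_j` is a
nearest neighbor of the location of `u_k`, then `D(j) < D(k)`. -/
theorem depth_strict_mono {d : ℕ} (hd : 1 ≤ d) (u : List (Fin d → ℤ)) (j k : ℕ)
    (hj : 1 ≤ j) (hjk : j < k) (hk : k ≤ u.length)
    (hnbr : u.getD (j - 1) 0 - u.getD (k - 1) 0 ∈ nbr d) :
    latticeDepth u j < latticeDepth u k := by
  have hjn : j ≤ u.length := le_trans hjk.le hk
  have hTj : (u.take j).length = j := by simp [hjn]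
  have hTk : (u.take k).length = k := by simp [hk]
  -- the set defining D(j) is nonempty and bounded, so the sup is attained
  have hne : ∃ γ : ℕ → (Fin d → ℤ), IsLatticePath (u.take j) (u.getD (j - 1) 0) γ ∧
      latticeDepth u j
        = ((Finset.range (j - 1)).filter fun i => γ (i + 1) = u.getD i 0).card := by
    have hmem := Nat.sSup_mem (s := {w : ℕ | ∃ γ : ℕ → (Fin d → ℤ),
        IsLatticePath (u.take j) (u.getD (j - 1) 0) γ ∧
        w = ((Finset.range (j - 1)).filter fun i => γ (i + 1) = u.getD i 0).card})
      ⟨_, fun _ => u.getD (j - 1) 0, ⟨rfl, fun _ _ => Or.inl rfl⟩, rfl⟩ (depth_bdd u j)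
    exact hmem
  obtain ⟨γ, hγ, hw⟩ := hne
  have hstart : γ j = u.getD (j - 1) 0 := by have := hγ.1; rwa [hTj] at this
  -- the extended path
  set γ' : ℕ → (Fin d → ℤ) := fun i =>
    if i < j then γ i else if i < k then u.getD (j - 1) 0 else u.getD (k - 1) 0 with hγ'def
  have hγ'lt : ∀ i < j, γ' i = γ i := fun i hi => by simp [hγ'def, hi]
  have hγ'mid : ∀ i, j ≤ i → i < k → γ' i = u.getD (j - 1) 0 := fun i h1 h2 => by
    simp [hγ'def, Nat.not_lt.2 h1, h2]
  have hγ'k : γ' k = u.getD (k - 1) 0 := by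
    simp [hγ'def, Nat.not_lt.2 hjk.le, lt_irrefl]
  have hγ'eq : ∀ i ≤ j, γ' i = γ i := by
    intro i hi
    rcases lt_or_eq_of_le hi with h | h
    · exact hγ'lt i h
    · subst h; rw [hγ'mid i le_rfl hjk, hstart]
  have hpath : IsLatticePath (u.take k) (u.getD (k - 1) 0) γ' := by
    constructor
    · rw [hTk]; exact hγ'k
    · intro i hi
      rw [hTk] at hi
      rw [getD_take' u hi]
      rcases lt_or_ge i j with hij | hij
      · -- use the step of γ
        have hstep := hγ.2 i (by omega)
        rw [getD_take' u hij] at hstep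
        rw [hγ'eq i hij.le, hγ'eq (i + 1) (by omega)]
        exact hstep
      · rcases lt_or_eq_of_le (Nat.succ_le_of_lt hi) with h1 | h1
        · -- stay
          left
          rw [hγ'mid i hij (by omega), hγ'mid (i + 1) (by omega) h1]
        · -- last step: move from u_{j-1} to u_{k-1}
          right
          have hik : i = k - 1 := by omega
          have h1' : i + 1 = k := h1
          have h2 : γ' (i + 1) = u.getD (k - 1) 0 := by rw [h1', hγ'k]
          constructor
          · rw [h2, hik]
          · rw [h2, hγ'mid i hij hi]
            exact hnbr
  -- compare the weights
  have hsub : insert (j - 1) ((Finset.range (j - 1)).filter fun i => γ (i + 1) = u.getD i 0)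
      ⊆ (Finset.range (k - 1)).filter fun i => γ' (i + 1) = u.getD i 0 := by
    intro i hi
    rcases Finset.mem_insert.1 hi with h | h
    · subst h
      refine Finset.mem_filter.2 ⟨Finset.mem_range.2 (by omega), ?_⟩
      have : j - 1 + 1 = j := by omega
      rw [this, hγ'eq j le_rfl, hstart]
    · obtain ⟨hr, hc⟩ := Finset.mem_filter.1 h
      have hr' := Finset.mem_range.1 hr
      refine Finset.mem_filter.2 ⟨Finset.mem_range.2 (by omega), ?_⟩
      rw [hγ'eq (i + 1) (by omega)]
      exact hc
  have hninsert : j - 1 ∉ (Finset.range (j - 1)).filter fun i => γ (i + 1) = u.getD i 0 := by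
    intro h
    exact absurd (Finset.mem_range.1 (Finset.mem_filter.1 h).1) (lt_irrefl _)
  have hcard : latticeDepth u j + 1
      ≤ ((Finset.range (k - 1)).filter fun i => γ' (i + 1) = u.getD i 0).card := by
    rw [hw]
    calc _ = (insert (j - 1)
          ((Finset.range (j - 1)).filter fun i => γ (i + 1) = u.getD i 0)).card := by
          rw [Finset.card_insert_of_notMem hninsert]
      _ ≤ _ := Finset.card_le_card hsub
  have hle : ((Finset.range (k - 1)).filter fun i => γ' (i + 1) = u.getD i 0).card
      ≤ latticeDepth u k :=
    le_csSup (depth_bdd u k) ⟨γ', hpath, rfl⟩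
  omega

end
end

section
/- For an update list u and initial condition H : ℤ^d → ℤ, define Wmin(u, H)(x) as the minimum of W(γ) + H(γ(0)) over all lattice paths γ for u starting at x (this minimum exists, since only finitely many locations are reachable). Then for every y, x ∈ ℤ^d: appending y to the list u as a new final update gives Wmin(u ⧺ (y), H)(y) = 1 + min over n ∈ N₀ of Wmin(u, H)(y + n), and Wmin(u ⧺ (y), H)(x) = Wmin(u, H)(x) for every x ≠ y. -/
open Classical MeasureTheory

noncomputable section

/-- `Wmin u H x`: the minimum of `W(γ) + H(γ 0)` over all lattice paths `γ` for `u`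
starting at `x` (realized as an `sInf`, which is attained since only finitely many
locations are reachable). -/
def Wmin {d : ℕ} (u : List (Fin d → ℤ)) (H : (Fin d → ℤ) → ℤ) (x : Fin d → ℤ) : ℤ :=
  sInf {w : ℤ | ∃ γ : ℕ → (Fin d → ℤ), IsLatticePath u x γ ∧
    w = (pathWeight u γ : ℤ) + H (γ 0)}

-- AUX START
namespace WminAux

variable {d : ℕ}

def PS (u : List (Fin d → ℤ)) (H : (Fin d → ℤ) → ℤ) (x : Fin d → ℤ) : Set ℤ :=
  {w : ℤ | ∃ γ : ℕ → (Fin d → ℤ), IsLatticePath u x γ ∧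
    w = (pathWeight u γ : ℤ) + H (γ 0)}

lemma Wmin_eq (u : List (Fin d → ℤ)) (H : (Fin d → ℤ) → ℤ) (x : Fin d → ℤ) :
    Wmin u H x = sInf (PS u H x) := rfl

lemma PS_nonempty {u : List (Fin d → ℤ)} {H : (Fin d → ℤ) → ℤ} {x : Fin d → ℤ} :
    (PS u H x).Nonempty :=
  ⟨_, fun _ => x, ⟨rfl, fun _ _ => Or.inl rfl⟩, rfl⟩

lemma nbr_abs_le {e : Fin d → ℤ} (he : e ∈ nbr d) (i : Fin d) : |e i| ≤ 1 := by
  rcases he with ⟨j, hj | hj⟩ <;> subst hj <;> rw [Pi.single_apply] <;>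
    split_ifs <;> norm_num

lemma path_bound {u : List (Fin d → ℤ)} {x : Fin d → ℤ} {γ : ℕ → (Fin d → ℤ)}
    (h : IsLatticePath u x γ) :
    ∀ m k, k + m = u.length → ∀ i, |γ k i - x i| ≤ (m : ℤ) := by
  intro m
  induction m with
  | zero =>
    intro k hk i
    simp only [Nat.add_zero] at hk
    subst hk
    rw [h.1]
    simp
  | succ m ih =>
    intro k hk i
    have hk1 : (k + 1) + m = u.length := by omega
    have ih' := ih (k + 1) hk1 i
    have hlt : k < u.length := by omega
    have hstep : |γ k i - γ (k + 1) i| ≤ 1 := by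
      rcases h.2 k hlt with heq | ⟨_, hnbr⟩
      · rw [heq]; simp
      · have := nbr_abs_le hnbr i
        simpa [Pi.sub_apply] using this
    calc |γ k i - x i| ≤ |γ k i - γ (k+1) i| + |γ (k+1) i - x i| := abs_sub_le _ _ _
      _ ≤ 1 + m := add_le_add hstep ih'
      _ = ((m + 1 : ℕ) : ℤ) := by push_cast; ring

lemma PS_bddBelow {u : List (Fin d → ℤ)} {H : (Fin d → ℤ) → ℤ} {x : Fin d → ℤ} :
    BddBelow (PS u H x) := by
  obtain ⟨b, hb⟩ := ((Set.Finite.pi fun i =>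
    Set.finite_Icc (x i - u.length) (x i + u.length)).image H).bddBelow
  refine ⟨b, ?_⟩
  rintro w ⟨γ, hγ, rfl⟩
  have h0 : ∀ i, |γ 0 i - x i| ≤ (u.length : ℤ) := path_bound hγ u.length 0 (by omega)
  have hmem : γ 0 ∈ Set.pi Set.univ fun i => Set.Icc (x i - u.length) (x i + u.length) := by
    intro i _
    have := h0 i
    rw [abs_le] at this
    exact ⟨by linarith [this.1], by linarith [this.2]⟩
  have hb' := hb (Set.mem_image_of_mem H hmem)
  have hw : (0:ℤ) ≤ (pathWeight u γ : ℤ) := Int.natCast_nonneg _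
  linarith

lemma getD_last (u : List (Fin d → ℤ)) (y : Fin d → ℤ) :
    (u ++ [y]).getD u.length 0 = y := by
  rw [List.getD_append_right _ _ _ _ le_rfl]
  simp

lemma len_append (u : List (Fin d → ℤ)) (y : Fin d → ℤ) :
    (u ++ [y]).length = u.length + 1 := by simp

lemma PS_append_ne {u : List (Fin d → ℤ)} {H : (Fin d → ℤ) → ℤ} {x y : Fin d → ℤ}
    (hxy : x ≠ y) : PS (u ++ [y]) H x = PS u H x := by
  ext w
  constructor
  · rintro ⟨γ, ⟨hend, hstep⟩, rfl⟩
    rw [len_append] at hend hstep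
    have hn : γ u.length = x := by
      rcases hstep u.length (by omega) with h | ⟨h, _⟩
      · rw [h, hend]
      · rw [getD_last] at h
        exact absurd (hend ▸ h) hxy
    have hpath : IsLatticePath u x γ := by
      refine ⟨hn, fun k hk => ?_⟩
      have := hstep k (by omega)
      rwa [List.getD_append _ _ _ _ hk] at this
    refine ⟨γ, hpath, ?_⟩
    congr 1
    unfold pathWeight
    rw [len_append, Finset.range_add_one, Finset.filter_insert, if_neg, Finset.filter_congr
      (fun k hk => by rw [List.getD_append _ _ _ _ (Finset.mem_range.mp hk)])]
    rw [getD_last, hend]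
    exact hxy
  · rintro ⟨γ, ⟨hend, hstep⟩, rfl⟩
    set γ' := Function.update γ (u.length + 1) x with hγ'
    have hle : ∀ k, k ≤ u.length → γ' k = γ k := fun k hk =>
      Function.update_of_ne (by omega) _ _
    have htop : γ' (u.length + 1) = x := Function.update_self _ _ _
    refine ⟨γ', ⟨?_, ?_⟩, ?_⟩
    · rw [len_append]; exact htop
    · rw [len_append]
      intro k hk
      rcases Nat.lt_succ_iff_lt_or_eq.mp hk with hk' | rfl
      · rw [hle k (by omega), hle (k+1) (by omega), List.getD_append _ _ _ _ hk']
        exact hstep k hk'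
      · left
        rw [hle _ le_rfl, htop, hend]
    · have h0 : γ' 0 = γ 0 := hle 0 (by omega)
      rw [h0]
      congr 1
      unfold pathWeight
      rw [len_append, Finset.range_add_one, Finset.filter_insert, if_neg, Finset.filter_congr
        (p := fun k => γ' (k+1) = (u ++ [y]).getD k 0) (q := fun k => γ (k+1) = u.getD k 0)
        (fun k hk => by
          show γ' (k + 1) = (u ++ [y]).getD k 0 ↔ γ (k + 1) = u.getD k 0
          rw [hle (k+1) (by have := Finset.mem_range.mp hk; omega),
            List.getD_append _ _ _ _ (Finset.mem_range.mp hk)])]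
      rw [getD_last, htop]
      exact hxy

lemma PS_append_self {u : List (Fin d → ℤ)} {H : (Fin d → ℤ) → ℤ} {y : Fin d → ℤ} :
    PS (u ++ [y]) H y = (fun w => 1 + w) '' ⋃ e ∈ nbr0 d, PS u H (y + e) := by
  ext w
  constructor
  · rintro ⟨γ, ⟨hend, hstep⟩, rfl⟩
    rw [len_append] at hend hstep
    have he : γ u.length - y ∈ nbr0 d := by
      rcases hstep u.length (by omega) with h | ⟨_, h2⟩
      · right
        rw [h, hend]
        simp
      · left
        rwa [hend] at h2
    have hpath : IsLatticePath u (y + (γ u.length - y)) γ := by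
      refine ⟨by ring, fun k hk => ?_⟩
      have := hstep k (by omega)
      rwa [List.getD_append _ _ _ _ hk] at this
    have hW : pathWeight (u ++ [y]) γ = pathWeight u γ + 1 := by
      unfold pathWeight
      rw [len_append, Finset.range_add_one, Finset.filter_insert, if_pos, Finset.filter_congr
        (fun k hk => by rw [List.getD_append _ _ _ _ (Finset.mem_range.mp hk)]),
        Finset.card_insert_of_notMem]
      · intro hmem
        exact absurd (Finset.mem_of_mem_filter _ hmem) (by simp)
      · rw [getD_last]; exact hend
    refine ⟨(pathWeight u γ : ℤ) + H (γ 0), Set.mem_biUnion he ⟨γ, hpath, rfl⟩, ?_⟩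
    rw [hW]
    push_cast
    ring
  · rintro ⟨z, hz, rfl⟩
    rw [Set.mem_iUnion₂] at hz
    obtain ⟨e, he, γ, ⟨hend, hstep⟩, rfl⟩ := hz
    set γ' := Function.update γ (u.length + 1) y with hγ'
    have hle : ∀ k, k ≤ u.length → γ' k = γ k := fun k hk =>
      Function.update_of_ne (by omega) _ _
    have htop : γ' (u.length + 1) = y := Function.update_self _ _ _
    have hpath : IsLatticePath (u ++ [y]) y γ' := by
      refine ⟨by rw [len_append]; exact htop, ?_⟩
      rw [len_append]
      intro k hk
      rcases Nat.lt_succ_iff_lt_or_eq.mp hk with hk' | rfl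
      · rw [hle k (by omega), hle (k+1) (by omega), List.getD_append _ _ _ _ hk']
        exact hstep k hk'
      · rcases he with hnbr | h0
        · right
          rw [hle _ le_rfl, htop, getD_last, hend]
          exact ⟨rfl, by simpa using hnbr⟩
        · left
          rw [hle _ le_rfl, htop, hend, Set.mem_singleton_iff.mp h0, add_zero]
    have hW : pathWeight (u ++ [y]) γ' = pathWeight u γ + 1 := by
      unfold pathWeight
      rw [len_append, Finset.range_add_one, Finset.filter_insert, if_pos, Finset.filter_congr
        (p := fun k => γ' (k+1) = (u ++ [y]).getD k 0) (q := fun k => γ (k+1) = u.getD k 0)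
        (fun k hk => by
          show γ' (k + 1) = (u ++ [y]).getD k 0 ↔ γ (k + 1) = u.getD k 0
          rw [hle (k+1) (by have := Finset.mem_range.mp hk; omega),
            List.getD_append _ _ _ _ (Finset.mem_range.mp hk)]),
        Finset.card_insert_of_notMem]
      · intro hmem
        exact absurd (Finset.mem_of_mem_filter _ hmem) (by simp)
      · rw [getD_last]; exact htop
    refine ⟨γ', hpath, ?_⟩
    rw [hW, hle 0 (by omega)]
    push_cast
    ring

lemma nbr_finite : (nbr d).Finite := by
  have hsub : nbr d ⊆ Set.range (fun p : Fin d × Bool =>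
      Pi.single p.1 (if p.2 then (1:ℤ) else -1)) := by
    rintro v ⟨i, h | h⟩
    · exact ⟨(i, true), h.symm⟩
    · exact ⟨(i, false), h.symm⟩
  exact (Set.finite_range _).subset hsub

lemma nbr0_finite : (nbr0 d).Finite := nbr_finite.union (Set.finite_singleton 0)

lemma nbr0_nonempty : (nbr0 d).Nonempty := ⟨0, Or.inr rfl⟩

lemma sInf_one_add {S : Set ℤ} (hne : S.Nonempty) (hbd : BddBelow S) :
    sInf ((fun w => 1 + w) '' S) = 1 + sInf S := by
  obtain ⟨b, hb⟩ := hbd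
  apply le_antisymm
  · exact csInf_le ⟨1 + b, by rintro w ⟨z, hz, rfl⟩; exact add_le_add (le_refl 1) (hb hz)⟩
      (Set.mem_image_of_mem _ (Int.csInf_mem hne ⟨b, hb⟩))
  · apply le_csInf (hne.image _)
    rintro w ⟨z, hz, rfl⟩
    exact add_le_add (le_refl 1) (csInf_le ⟨b, hb⟩ hz)

lemma sInf_biUnion_eq {T : Set (Fin d → ℤ)} (hT : T.Finite) (hTne : T.Nonempty)
    {S : (Fin d → ℤ) → Set ℤ} (hne : ∀ e ∈ T, (S e).Nonempty)
    (hbd : ∀ e ∈ T, BddBelow (S e)) :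
    sInf (⋃ e ∈ T, S e) = sInf ((fun e => sInf (S e)) '' T) := by
  have hUne : (⋃ e ∈ T, S e).Nonempty := by
    obtain ⟨e, he⟩ := hTne
    obtain ⟨w, hw⟩ := hne e he
    exact ⟨w, Set.mem_biUnion he hw⟩
  have hUbd : BddBelow (⋃ e ∈ T, S e) := (Set.Finite.bddBelow_biUnion hT).2 hbd
  apply le_antisymm
  · apply le_csInf (hTne.image _)
    rintro b ⟨e, he, rfl⟩
    exact csInf_le_csInf hUbd (hne e he) (Set.subset_biUnion_of_mem he)
  · apply le_csInf hUne
    intro w hw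
    rw [Set.mem_iUnion₂] at hw
    obtain ⟨e, he, hw⟩ := hw
    exact le_trans (csInf_le (hT.image _).bddBelow (Set.mem_image_of_mem _ he))
      (csInf_le (hbd e he) hw)

end WminAux
-- AUX END

open WminAux

/-- appending `y` as a new final update gives
`Wmin (u ++ [y]) H y = 1 + min over n ∈ N₀ of Wmin u H (y + n)`, while
`Wmin (u ++ [y]) H x = Wmin u H x` for every `x ≠ y`. -/
theorem Wmin_append {d : ℕ} (hd : 1 ≤ d) (u : List (Fin d → ℤ))
    (H : (Fin d → ℤ) → ℤ) (y : Fin d → ℤ) :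
    Wmin (u ++ [y]) H y = 1 + sInf ((fun n => Wmin u H (y + n)) '' nbr0 d) ∧
    ∀ x : Fin d → ℤ, x ≠ y → Wmin (u ++ [y]) H x = Wmin u H x := by
  constructor
  · have hUne : (⋃ e ∈ nbr0 d, PS u H (y + e)).Nonempty := by
      exact ⟨_, Set.mem_biUnion nbr0_nonempty.choose_spec PS_nonempty.choose_spec⟩
    have hUbd : BddBelow (⋃ e ∈ nbr0 d, PS u H (y + e)) :=
      (Set.Finite.bddBelow_biUnion nbr0_finite).2 fun e _ => PS_bddBelow
    simp only [Wmin_eq]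
    rw [PS_append_self, sInf_one_add hUne hUbd,
      sInf_biUnion_eq nbr0_finite nbr0_nonempty (fun e _ => PS_nonempty)
        (fun e _ => PS_bddBelow)]
  · intro x hxy
    simp only [Wmin_eq]
    rw [PS_append_ne hxy]

end
end

section
/- (Minimal weight characterization of RSOS.) Suppose the initial condition H : ℤ^d → ℤ satisfies |H(y) − H(y+e)| ≤ 1 for all y ∈ ℤ^d and e ∈ N. Then for every update list u and every x ∈ ℤ^d, RSOS(u, H)(x) equals the minimum of W(γ) + H(γ(0)) over all lattice paths γ for u starting at x. -/
open Classical MeasureTheory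

noncomputable section

def Lip {d : ℕ} (H : (Fin d → ℤ) → ℤ) : Prop :=
  ∀ y : Fin d → ℤ, ∀ e ∈ nbr d, |H y - H (y + e)| ≤ 1

lemma nbr_ne_zero {d : ℕ} {e : Fin d → ℤ} (he : e ∈ nbr d) : e ≠ 0 := by
  obtain ⟨i, h | h⟩ := he <;> subst h <;> intro h0 <;>
    · have := congrFun h0 i; simp [Pi.single_apply] at this

lemma neg_mem_nbr {d : ℕ} {e : Fin d → ℤ} (he : e ∈ nbr d) : -e ∈ nbr d := by
  obtain ⟨i, h | h⟩ := he
  · exact ⟨i, Or.inr (by subst h; ext j; by_cases hj : j = i <;> simp [Pi.single_apply, hj])⟩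
  · exact ⟨i, Or.inl (by subst h; ext j; by_cases hj : j = i <;> simp [Pi.single_apply, hj])⟩

lemma lip_rsosStep {d : ℕ} {H : (Fin d → ℤ) → ℤ} (hH : Lip H) (a : Fin d → ℤ) :
    Lip (rsosStep H a) := by
  intro y e he
  have hLy := hH y e he
  unfold rsosStep
  by_cases hA : ∀ e ∈ nbr d, H a ≤ H (a + e)
  · have hnz : e ≠ 0 := nbr_ne_zero he
    by_cases hy : y = a
    · subst hy
      have h1 : y + e ≠ y := by
        intro h; apply hnz; have := congrArg (· - y) h; simpa using this
      have h2 : H y ≤ H (y + e) := hA e he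
      simp only [h1, hA, and_true, if_true, if_false, false_and, if_neg (by simp [h1] : ¬(y + e = y ∧ True))]
      rw [abs_le] at hLy ⊢; omega
    · by_cases hy2 : y + e = a
      · have hmem : -e ∈ nbr d := neg_mem_nbr he
        have h3 : H a ≤ H (a + -e) := hA _ hmem
        have h4 : a + -e = y := by rw [← hy2]; abel
        rw [h4] at h3
        simp only [hy, false_and, if_false, hy2, hA, and_true, if_true, true_and]
        rw [abs_le] at hLy ⊢; rw [hy2] at hLy; omega
      · simp [hy, hy2]
        exact hLy
  · simp [hA]
    exact hLy
lemma isLatticePath_cons {d : ℕ} {u : List (Fin d → ℤ)} {a x : Fin d → ℤ} {γ : ℕ → Fin d → ℤ} :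
    IsLatticePath (a :: u) x γ ↔
      (γ 0 = γ 1 ∨ (γ 1 = a ∧ γ 0 - γ 1 ∈ nbr d)) ∧
        IsLatticePath u x (fun k => γ (k + 1)) := by
  constructor
  · rintro ⟨hend, hstep⟩
    refine ⟨?_, ?_, ?_⟩
    · have := hstep 0 (by simp); simpa using this
    · simpa [List.length_cons] using hend
    · intro k hk
      have := hstep (k + 1) (by simpa using Nat.succ_lt_succ hk)
      simpa using this
  · rintro ⟨h0, hend, hstep⟩
    refine ⟨by simpa [List.length_cons] using hend, ?_⟩
    intro k hk
    cases k with
    | zero => simpa using h0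
    | succ j => have := hstep j (by simp at hk; omega); simpa using this

lemma pathWeight_cons {d : ℕ} (u : List (Fin d → ℤ)) (a : Fin d → ℤ) (γ : ℕ → Fin d → ℤ) :
    pathWeight (a :: u) γ =
      pathWeight u (fun k => γ (k + 1)) + (if γ 1 = a then 1 else 0) := by
  unfold pathWeight
  rw [Finset.card_filter, Finset.card_filter, List.length_cons, Finset.sum_range_succ']
  simp

lemma lb {d : ℕ} : ∀ (u : List (Fin d → ℤ)) (H : (Fin d → ℤ) → ℤ), Lip H →
    ∀ (x : Fin d → ℤ) (γ : ℕ → Fin d → ℤ),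
    IsLatticePath u x γ → H x ≤ (pathWeight u γ : ℤ) + H (γ 0) := by
  intro u
  induction u with
  | nil =>
    rintro H hH x γ ⟨hend, -⟩
    simp only [List.length_nil] at hend
    simp [pathWeight, hend]
  | cons a u ih =>
    intro H hH x γ hγ
    rw [isLatticePath_cons] at hγ
    obtain ⟨h0, hpath⟩ := hγ
    have hIH := ih H hH x _ hpath
    simp only [Nat.zero_add] at hIH
    rw [pathWeight_cons]
    push_cast
    rcases h0 with h | ⟨h1, he⟩
    · rw [h] at *
      split_ifs <;> omega
    · have := hH (γ 1) _ he
      have hg0 : γ 1 + (γ 0 - γ 1) = γ 0 := by abel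
      rw [hg0] at this
      rw [abs_le] at this
      rw [if_pos h1]
      omega
lemma main_aux {d : ℕ} : ∀ (u : List (Fin d → ℤ)) (H : (Fin d → ℤ) → ℤ), Lip H →
    ∀ x : Fin d → ℤ,
    RSOS u H x = sInf {w : ℤ | ∃ γ : ℕ → (Fin d → ℤ), IsLatticePath u x γ ∧
      w = (pathWeight u γ : ℤ) + H (γ 0)} := by
  intro u
  induction u with
  | nil =>
    intro H hH x
    have hset : {w : ℤ | ∃ γ : ℕ → (Fin d → ℤ), IsLatticePath [] x γ ∧
        w = (pathWeight [] γ : ℤ) + H (γ 0)} = {H x} := by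
      ext w
      simp only [Set.mem_setOf_eq, Set.mem_singleton_iff]
      constructor
      · rintro ⟨γ, ⟨hend, -⟩, rfl⟩
        simp only [List.length_nil] at hend
        simp [pathWeight, hend]
      · rintro rfl
        exact ⟨fun _ => x, ⟨rfl, by simp⟩, by simp [pathWeight]⟩
    rw [hset, csInf_singleton]
    rfl
  | cons a u ih =>
    intro H hH x
    have hH' : Lip (rsosStep H a) := lip_rsosStep hH a
    have hRS : RSOS (a :: u) H x = RSOS u (rsosStep H a) x := rfl
    rw [hRS, ih (rsosStep H a) hH' x]
    set H' := rsosStep H a with hH'def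
    set S' : Set ℤ := {w : ℤ | ∃ γ : ℕ → (Fin d → ℤ), IsLatticePath u x γ ∧
      w = (pathWeight u γ : ℤ) + H' (γ 0)} with hS'
    set S : Set ℤ := {w : ℤ | ∃ γ : ℕ → (Fin d → ℤ), IsLatticePath (a :: u) x γ ∧
      w = (pathWeight (a :: u) γ : ℤ) + H (γ 0)} with hS
    have hconst : ∀ (v : List (Fin d → ℤ)), IsLatticePath v x (fun _ => x) :=
      fun v => ⟨rfl, fun k _ => Or.inl rfl⟩
    have hne : S.Nonempty := ⟨_, ⟨fun _ => x, hconst _, rfl⟩⟩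
    have hne' : S'.Nonempty := ⟨_, ⟨fun _ => x, hconst _, rfl⟩⟩
    have hbdd : BddBelow S := ⟨H x, by rintro w ⟨γ, hγ, rfl⟩; exact lb _ H hH x γ hγ⟩
    have hbdd' : BddBelow S' := ⟨H' x, by rintro w ⟨γ, hγ, rfl⟩; exact lb _ H' hH' x γ hγ⟩
    apply le_antisymm
    · -- sInf S' ≤ sInf S : from each w ∈ S produce w' ∈ S' with w' ≤ w
      apply le_csInf hne
      rintro w ⟨γ, hγ, rfl⟩
      rw [isLatticePath_cons] at hγ
      obtain ⟨h0, hpath⟩ := hγ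
      have hmem : (pathWeight u (fun k => γ (k + 1)) : ℤ) + H' (γ 1) ∈ S' :=
        ⟨fun k => γ (k + 1), hpath, by norm_num⟩
      refine le_trans (csInf_le hbdd' hmem) ?_
      rw [pathWeight_cons]
      push_cast
      have key : H' (γ 1) ≤ (if γ 1 = a then (1 : ℤ) else 0) + H (γ 0) := by
        rcases h0 with h | ⟨h1, he⟩
        · rw [← h]
          by_cases hya : γ 0 = a
          · rw [if_pos hya, hH'def]
            unfold rsosStep
            rw [hya]
            split_ifs <;> omega
          · rw [if_neg hya, hH'def]
            unfold rsosStep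
            rw [if_neg (by simp [hya])]
            omega
        · rw [if_pos h1, hH'def]
          unfold rsosStep
          rw [h1]
          have he' : γ 0 - a ∈ nbr d := by rw [← h1]; exact he
          have hg0 : a + (γ 0 - a) = γ 0 := by abel
          by_cases hA : ∀ e ∈ nbr d, H a ≤ H (a + e)
          · rw [if_pos ⟨rfl, hA⟩]
            have := hA (γ 0 - a) he'
            rw [hg0] at this
            omega
          · rw [if_neg (by simp [hA])]
            have := hH a (γ 0 - a) he'
            rw [hg0] at this
            rw [abs_le] at this
            omega
      omega
    · -- sInf S ≤ sInf S'
      apply le_csInf hne'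
      rintro w ⟨γ', hγ', rfl⟩
      by_cases hza : γ' 0 = a
      · by_cases hA : ∀ e ∈ nbr d, H a ≤ H (a + e)
        · -- accepted: prepend staying at a
          set γ : ℕ → Fin d → ℤ := fun k => Nat.rec (γ' 0) (fun j _ => γ' j) k with hγdef
          have hsh : (fun k => γ (k + 1)) = γ' := rfl
          have hmem : (pathWeight (a :: u) γ : ℤ) + H (γ 0) ∈ S :=
            ⟨γ, isLatticePath_cons.2 ⟨Or.inl rfl, by rw [hsh]; exact hγ'⟩, rfl⟩
          refine le_trans (csInf_le hbdd hmem) ?_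
          rw [pathWeight_cons, hsh]
          push_cast
          have : γ 0 = γ' 0 := rfl
          have h1 : γ 1 = γ' 0 := rfl
          rw [this, h1, if_pos hza, hH'def]
          unfold rsosStep
          rw [hza, if_pos ⟨rfl, hA⟩]
          omega
        · -- rejected: move to a strictly lower neighbor
          push_neg at hA
          obtain ⟨e, he, hlt⟩ := hA
          set γ : ℕ → Fin d → ℤ := fun k => Nat.rec (a + e) (fun j _ => γ' j) k with hγdef
          have hsh : (fun k => γ (k + 1)) = γ' := rfl
          have hstep0 : γ 1 = a ∧ γ 0 - γ 1 ∈ nbr d := by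
            constructor
            · show γ' 0 = a; exact hza
            · show (a + e) - γ' 0 ∈ nbr d
              rw [hza]
              simpa using he
          have hmem : (pathWeight (a :: u) γ : ℤ) + H (γ 0) ∈ S :=
            ⟨γ, isLatticePath_cons.2 ⟨Or.inr hstep0, by rw [hsh]; exact hγ'⟩, rfl⟩
          refine le_trans (csInf_le hbdd hmem) ?_
          rw [pathWeight_cons, hsh]
          push_cast
          have h0 : γ 0 = a + e := rfl
          have h1 : γ 1 = γ' 0 := rfl
          rw [h0, h1, if_pos hza, hza, hH'def]
          unfold rsosStep
          rw [if_neg (by intro h; exact absurd (h.2 e he) (not_le.2 hlt))]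
          omega
      · -- γ' 0 ≠ a : prepend staying
        set γ : ℕ → Fin d → ℤ := fun k => Nat.rec (γ' 0) (fun j _ => γ' j) k with hγdef
        have hsh : (fun k => γ (k + 1)) = γ' := rfl
        have hmem : (pathWeight (a :: u) γ : ℤ) + H (γ 0) ∈ S :=
          ⟨γ, isLatticePath_cons.2 ⟨Or.inl rfl, by rw [hsh]; exact hγ'⟩, rfl⟩
        refine le_trans (csInf_le hbdd hmem) ?_
        rw [pathWeight_cons, hsh]
        push_cast
        have h0 : γ 0 = γ' 0 := rfl
        have h1 : γ 1 = γ' 0 := rfl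
        rw [h0, h1, if_neg hza, hH'def]
        unfold rsosStep
        rw [if_neg (by simp [hza])]
        omega


/-- minimal weight characterization of RSOS: if the initial condition
has adjacent differences bounded by one, then the RSOS height at `x` equals the
minimum of `W(γ) + H(γ 0)` over all lattice paths `γ` for `u` starting at `x`. -/
theorem rsos_eq_min_weight {d : ℕ} (hd : 1 ≤ d) (H : (Fin d → ℤ) → ℤ)
    (hH : ∀ y : Fin d → ℤ, ∀ e ∈ nbr d, |H y - H (y + e)| ≤ 1)
    (u : List (Fin d → ℤ)) (x : Fin d → ℤ) :
    RSOS u H x = sInf {w : ℤ | ∃ γ : ℕ → (Fin d → ℤ), IsLatticePath u x γ ∧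
      w = (pathWeight u γ : ℤ) + H (γ 0)} := by
  exact main_aux u H hH x

end
end

section
/- (Sandwich preservation.) Let H, H' : ℤ^d → ℤ be initial conditions with H(x) ≤ H'(x) ≤ H(x) + 1 for all x ∈ ℤ^d. Then for every update list u and every x ∈ ℤ^d, RSOS(u, H)(x) ≤ RSOS(u, H')(x) ≤ RSOS(u, H)(x) + 1. -/
open Classical MeasureTheory

noncomputable section

lemma rsosStep_sandwich {d : ℕ} (f g : (Fin d → ℤ) → ℤ)
    (h : ∀ y, f y ≤ g y ∧ g y ≤ f y + 1) (a : Fin d → ℤ) :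
    ∀ y, rsosStep f a y ≤ rsosStep g a y ∧ rsosStep g a y ≤ rsosStep f a y + 1 := by
  intro y
  unfold rsosStep
  by_cases hy : y = a
  · subst hy
    split_ifs with hf hg hg
    · exact ⟨by linarith [(h y).1], by linarith [(h y).2]⟩
    · -- f accepts, g rejects: g y = f y + 1
      have hgy : g y = f y + 1 := by
        rcases eq_or_lt_of_le (h y).1 with heq | hlt
        · exfalso
          exact hg ⟨rfl, fun e he =>
            le_trans (le_of_eq heq.symm) (le_trans (hf.2 e he) (h (y + e)).1)⟩
        · linarith [(h y).2]
      exact ⟨by linarith, by linarith⟩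
    · -- f rejects, g accepts: g y = f y
      have hgy : g y = f y := by
        rcases eq_or_lt_of_le (h y).1 with heq | hlt
        · exact heq.symm
        · exfalso
          have hgy1 : g y = f y + 1 := by linarith [(h y).2]
          have : ∀ e ∈ nbr d, f y ≤ f (y + e) := by
            intro e he
            have h1 := (h (y + e)).2
            have h2 := hg.2 e he
            linarith
          exact hf ⟨rfl, this⟩
      exact ⟨by linarith, by linarith⟩
    · exact h y
  · rw [if_neg (fun hc => hy hc.1), if_neg (fun hc => hy hc.1)]
    exact h y

lemma rsos_sandwich_aux {d : ℕ} :
    ∀ (u : List (Fin d → ℤ)) (H H' : (Fin d → ℤ) → ℤ),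
    (∀ x, H x ≤ H' x ∧ H' x ≤ H x + 1) →
    ∀ x, RSOS u H x ≤ RSOS u H' x ∧ RSOS u H' x ≤ RSOS u H x + 1 := by
  intro u
  induction u with
  | nil => intro H H' h x; exact h x
  | cons a t ih =>
    intro H H' h x
    exact ih _ _ (rsosStep_sandwich H H' h a) x

/-- sandwich preservation: if `H ≤ H' ≤ H + 1` pointwise, then
`RSOS u H ≤ RSOS u H' ≤ RSOS u H + 1` pointwise, for every update list `u`. -/
theorem rsos_sandwich {d : ℕ} (hd : 1 ≤ d) (H H' : (Fin d → ℤ) → ℤ)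
    (hHH' : ∀ x : Fin d → ℤ, H x ≤ H' x ∧ H' x ≤ H x + 1)
    (u : List (Fin d → ℤ)) (x : Fin d → ℤ) :
    RSOS u H x ≤ RSOS u H' x ∧ RSOS u H' x ≤ RSOS u H x + 1 :=
  rsos_sandwich_aux u H H' hHH' x

end
end

section
/- (Adding one update changes the height by at most one.) Let H : ℤ^d → ℤ be any initial condition, u = (u_1, …, u_n) an update list, 0 ≤ j ≤ n, and y ∈ ℤ^d. Let u' = (u_1, …, u_j, y, u_{j+1}, …, u_n) be the list obtained by inserting the location y after position j. Then for every x ∈ ℤ^d, RSOS(u, H)(x) ≤ RSOS(u', H)(x) ≤ RSOS(u, H)(x) + 1. -/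
open Classical MeasureTheory

noncomputable section

/-- `Close f g` : `g` is pointwise between `f` and `f + 1`. -/
def Close {d : ℕ} (f g : (Fin d → ℤ) → ℤ) : Prop :=
  ∀ z, f z ≤ g z ∧ g z ≤ f z + 1

lemma close_step {d : ℕ} {f g : (Fin d → ℤ) → ℤ} (h : Close f g) (x : Fin d → ℤ) :
    Close (rsosStep f x) (rsosStep g x) := by
  intro z
  unfold rsosStep
  by_cases hz : z = x
  · subst hz
    simp only [true_and]
    split_ifs with hf hg hg
    · constructor <;> linarith [(h z).1, (h z).2]
    · have h1 : f z + 1 ≤ g z := by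
        by_contra hlt
        push_neg at hlt
        have hfg : g z = f z := le_antisymm (by linarith) (h z).1
        exact hg fun e he => by
          have := (h (z + e)).1; rw [hfg]; exact le_trans (hf e he) this
      constructor <;> linarith [(h z).2]
    · push_neg at hf
      obtain ⟨e, he, hlt⟩ := hf
      have hge : g z ≤ f z := by
        by_contra hc
        push_neg at hc
        have h1 : g z = f z + 1 := le_antisymm (h z).2 hc
        have := hg e he
        have := (h (z + e)).2
        linarith
      constructor <;> linarith [(h z).1]
    · exact h z
  · simp only [hz, false_and, if_false]
    exact h z

lemma close_foldl {d : ℕ} (l : List (Fin d → ℤ)) :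
    ∀ {f g : (Fin d → ℤ) → ℤ}, Close f g →
      Close (l.foldl rsosStep f) (l.foldl rsosStep g) := by
  induction l with
  | nil => intro f g h; exact h
  | cons a t ih => intro f g h; exact ih (close_step h a)

lemma close_self_step {d : ℕ} (f : (Fin d → ℤ) → ℤ) (y : Fin d → ℤ) :
    Close f (rsosStep f y) := by
  intro z
  unfold rsosStep
  split_ifs with h
  · rw [h.1]; omega
  · omega

/-- adding one update changes the height by at most one: inserting an
extra update at location `y` after position `j` of the update list `u` changes the
RSOS height at every site by at most one, and never decreases it. -/
theorem rsos_insert_update {d : ℕ} (hd : 1 ≤ d) (H : (Fin d → ℤ) → ℤ)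
    (u : List (Fin d → ℤ)) (j : ℕ) (hj : j ≤ u.length) (y : Fin d → ℤ)
    (x : Fin d → ℤ) :
    RSOS u H x ≤ RSOS (u.take j ++ y :: u.drop j) H x ∧
    RSOS (u.take j ++ y :: u.drop j) H x ≤ RSOS u H x + 1 := by
  have hu : RSOS u H = (u.drop j).foldl rsosStep ((u.take j).foldl rsosStep H) := by
    conv_lhs => rw [RSOS, ← List.take_append_drop j u, List.foldl_append]
  have hu' : RSOS (u.take j ++ y :: u.drop j) H =
      (u.drop j).foldl rsosStep (rsosStep ((u.take j).foldl rsosStep H) y) := by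
    rw [RSOS, List.foldl_append, List.foldl_cons]
  rw [hu, hu']
  exact close_foldl _ (close_self_step _ y) x

end
end

section
/- (Pyramid characterization of RSOS height.) Let u = (u_1, …, u_n) be an update list and x ∈ ℤ^d, and let RSOS(u, 0) denote the RSOS height with identically zero initial condition. Then RSOS(u, 0)(x) equals the largest integer h ≥ 0 such that either h = 0, or there exists a pyramid of height h centered at x within u. -/
open Classical MeasureTheory

noncomputable section

/-- A pyramid of height `h ≥ 1` centered at `x` within the update list `u`: an
assignment of (1-based) indices `P k y ∈ {1, …, n}` to every pair `(k, y)` with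
`1 ≤ k ≤ h` and `‖y - x‖₁ ≤ h - k`, such that the update with index `P k y` is at
location `y`, and each update of layer `k` occurs after all updates of layer `k - 1`
at adjacent locations. -/
def IsPyramid {d : ℕ} (u : List (Fin d → ℤ)) (x : Fin d → ℤ) (h : ℕ)
    (P : ℕ → (Fin d → ℤ) → ℕ) : Prop :=
  (∀ k y, 1 ≤ k → k ≤ h → l1 (y - x) ≤ h - k →
    1 ≤ P k y ∧ P k y ≤ u.length ∧ u.getD (P k y - 1) 0 = y) ∧
  (∀ k y z, 2 ≤ k → k ≤ h → l1 (y - x) ≤ h - k → z - y ∈ nbr0 d →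
    P (k - 1) z < P k y)

namespace RSOSAux

variable {d : ℕ}

/-- RSOS heights after the first `m` updates, started from zero. -/
def gpre (u : List (Fin d → ℤ)) (m : ℕ) : (Fin d → ℤ) → ℤ :=
  RSOS (u.take m) (fun _ => 0)

lemma gpre_zero (u : List (Fin d → ℤ)) (y : Fin d → ℤ) : gpre u 0 y = 0 := rfl

lemma gpre_succ_lt (u : List (Fin d → ℤ)) {m : ℕ} (hm : m < u.length) :
    gpre u (m+1) = rsosStep (gpre u m) (u.getD m 0) := by
  unfold gpre RSOS
  rw [List.take_succ, List.foldl_append]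
  have h1 : u[m]?.toList = [u.getD m 0] := by
    simp [List.getD_eq_getElem?_getD, List.getElem?_eq_getElem hm]
  rw [h1]
  rfl

lemma gpre_stable (u : List (Fin d → ℤ)) {m : ℕ} (hm : u.length ≤ m) :
    gpre u m = gpre u u.length := by
  unfold gpre
  rw [List.take_of_length_le hm, List.take_length]

lemma le_rsosStep (f : (Fin d → ℤ) → ℤ) (x y : Fin d → ℤ) : f y ≤ rsosStep f x y := by
  unfold rsosStep
  split_ifs with h
  · obtain ⟨rfl, -⟩ := h; linarith
  · exact le_refl _

lemma rsosStep_le (f : (Fin d → ℤ) → ℤ) (x y : Fin d → ℤ) : rsosStep f x y ≤ f y + 1 := by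
  unfold rsosStep
  split_ifs with h
  · obtain ⟨rfl, -⟩ := h; linarith
  · linarith

lemma rsosStep_ne (f : (Fin d → ℤ) → ℤ) (x y : Fin d → ℤ) (h : rsosStep f x y ≠ f y) :
    y = x ∧ (∀ e ∈ nbr d, f x ≤ f (x + e)) ∧ rsosStep f x y = f y + 1 := by
  unfold rsosStep at h ⊢
  split_ifs at h ⊢ with hc
  · obtain ⟨rfl, hc2⟩ := hc
    exact ⟨rfl, hc2, rfl⟩
  · exact absurd rfl h

lemma gpre_mono_succ (u : List (Fin d → ℤ)) (m : ℕ) (y : Fin d → ℤ) :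
    gpre u m y ≤ gpre u (m+1) y := by
  rcases lt_or_ge m u.length with hm | hm
  · rw [gpre_succ_lt u hm]; exact le_rsosStep _ _ _
  · rw [gpre_stable u hm, gpre_stable u (Nat.le_succ_of_le hm)]

lemma gpre_succ_le (u : List (Fin d → ℤ)) (m : ℕ) (y : Fin d → ℤ) :
    gpre u (m+1) y ≤ gpre u m y + 1 := by
  rcases lt_or_ge m u.length with hm | hm
  · rw [gpre_succ_lt u hm]; exact rsosStep_le _ _ _
  · rw [gpre_stable u hm, gpre_stable u (Nat.le_succ_of_le hm)]; linarith

lemma gpre_mono (u : List (Fin d → ℤ)) {m m' : ℕ} (h : m ≤ m') (y : Fin d → ℤ) :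
    gpre u m y ≤ gpre u m' y := by
  induction h with
  | refl => exact le_refl _
  | step h ih => exact le_trans ih (gpre_mono_succ u _ y)

lemma gpre_nonneg (u : List (Fin d → ℤ)) (m : ℕ) (y : Fin d → ℤ) :
    0 ≤ gpre u m y := by
  have := gpre_mono u (Nat.zero_le m) y
  rwa [gpre_zero] at this

lemma gpre_lip (u : List (Fin d → ℤ)) (m : ℕ) (y e : Fin d → ℤ) (he : e ∈ nbr d) :
    gpre u m y ≤ gpre u m (y + e) + 1 := by
  induction m with
  | zero => rw [gpre_zero, gpre_zero]; linarith
  | succ m ih =>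
    rcases lt_or_ge m u.length with hm | hm
    · rw [gpre_succ_lt u hm]
      by_cases hch : rsosStep (gpre u m) (u.getD m 0) y = gpre u m y
      · rw [hch]
        have h2 := le_rsosStep (gpre u m) (u.getD m 0) (y + e)
        linarith
      · obtain ⟨hyc, hcond, hval⟩ := rsosStep_ne _ _ _ hch
        rw [hval]
        have h1 := hcond e he
        rw [← hyc] at h1
        have h2 := le_rsosStep (gpre u m) (u.getD m 0) (y + e)
        linarith
    · rw [gpre_stable u (Nat.le_succ_of_le hm)]
      rw [gpre_stable u hm] at ih
      exact ih

lemma l1_zero : l1 (0 : Fin d → ℤ) = 0 := by simp [l1]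

lemma l1_eq_zero {v : Fin d → ℤ} (h : l1 v = 0) : v = 0 := by
  funext i
  have := Finset.sum_eq_zero_iff.mp h i (Finset.mem_univ i)
  simpa [Int.natAbs_eq_zero] using this

lemma l1_nbr {e : Fin d → ℤ} (he : e ∈ nbr d) : l1 e = 1 := by
  obtain ⟨i, hi | hi⟩ := he <;> subst hi <;>
    simp [l1, Pi.single_apply, apply_ite Int.natAbs]

lemma l1_add_le (v w : Fin d → ℤ) : l1 (v + w) ≤ l1 v + l1 w := by
  unfold l1
  rw [← Finset.sum_add_distrib]
  exact Finset.sum_le_sum fun i _ => by simpa using Int.natAbs_add_le (v i) (w i)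

lemma exists_step {v : Fin d → ℤ} (hv : v ≠ 0) :
    ∃ e ∈ nbr d, l1 (v - e) + 1 = l1 v := by
  have hex : ∃ i, v i ≠ 0 := by
    by_contra h
    push_neg at h
    exact hv (funext h)
  obtain ⟨i, hi⟩ := hex
  have hs : ∃ s : ℤ, Pi.single i s ∈ nbr d ∧ (v i - s).natAbs + 1 = (v i).natAbs := by
    rcases lt_or_gt_of_ne hi with h | h
    · exact ⟨-1, ⟨i, Or.inr rfl⟩, by omega⟩
    · exact ⟨1, ⟨i, Or.inl rfl⟩, by omega⟩
  obtain ⟨s, hsnbr, key⟩ := hs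
  refine ⟨Pi.single i s, hsnbr, ?_⟩
  have hpt : ∀ j, ((v - (Pi.single i s : Fin d → ℤ)) j).natAbs
      = Function.update (fun j => (v j).natAbs) i (v i - s).natAbs j := by
    intro j
    rw [Function.update_apply]
    by_cases hj : j = i
    · subst hj; simp
    · simp [Pi.single_eq_of_ne hj, hj]
  unfold l1
  rw [Finset.sum_congr rfl fun j _ => hpt j]
  rw [Finset.sum_update_of_mem (Finset.mem_univ i)]
  have h2 : ∑ j, (v j).natAbs = (v i).natAbs + ∑ j ∈ Finset.univ.erase i, (v j).natAbs :=
    (Finset.add_sum_erase _ _ (Finset.mem_univ i)).symm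
  simp only [Finset.erase_eq] at h2
  omega

lemma gpre_l1 (u : List (Fin d → ℤ)) (m : ℕ) :
    ∀ (n : ℕ) (v : Fin d → ℤ), l1 v = n → ∀ y, gpre u m y - (n : ℤ) ≤ gpre u m (y + v) := by
  intro n
  induction n with
  | zero =>
    intro v hv y
    have := l1_eq_zero hv
    subst this
    simp
  | succ n ih =>
    intro v hv y
    have hv0 : v ≠ 0 := by
      rintro rfl
      rw [l1_zero] at hv
      omega
    obtain ⟨e, he, hle⟩ := exists_step hv0
    have h1 := gpre_lip u m y e he
    have h2 := ih (v - e) (by omega) (y + e)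
    have h3 : y + e + (v - e) = y + v := by ring
    rw [h3] at h2
    push_cast at h2 ⊢
    linarith

/-- If the `m`-th update (1-based) is at `y`, the height at `y` is at least `k-1`,
and all neighbors are at least `k-1`, then after the update the height at `y` is
at least `k`. -/
lemma reach_step (u : List (Fin d → ℤ)) {m k : ℕ} {y : Fin d → ℤ}
    (hm1 : 1 ≤ m) (hmn : m ≤ u.length) (hu : u.getD (m-1) 0 = y)
    (hy : (k : ℤ) - 1 ≤ gpre u (m-1) y)
    (hnb : ∀ e ∈ nbr d, (k : ℤ) - 1 ≤ gpre u (m-1) (y + e)) :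
    (k : ℤ) ≤ gpre u m y := by
  have hlt : m - 1 < u.length := by omega
  have hstep : gpre u m = rsosStep (gpre u (m-1)) y := by
    have h := gpre_succ_lt u hlt
    rw [hu] at h
    rwa [Nat.sub_add_cancel hm1] at h
  rcases le_or_gt (k : ℤ) (gpre u (m-1) y) with h | h
  · refine h.trans ?_
    rw [hstep]
    exact le_rsosStep _ _ _
  · have heq : gpre u (m-1) y = (k : ℤ) - 1 := le_antisymm (by linarith) hy
    have hcond : ∀ e ∈ nbr d, gpre u (m-1) y ≤ gpre u (m-1) (y + e) := by
      intro e he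
      have := hnb e he
      linarith
    rw [hstep]
    unfold rsosStep
    rw [if_pos ⟨rfl, hcond⟩]
    linarith

lemma pyramid_le (u : List (Fin d → ℤ)) (x : Fin d → ℤ) (h : ℕ)
    (P : ℕ → (Fin d → ℤ) → ℕ) (hP : IsPyramid u x h P) (hh : 1 ≤ h) :
    (h : ℤ) ≤ RSOS u (fun _ => 0) x := by
  obtain ⟨hP1, hP2⟩ := hP
  have main : ∀ k, 1 ≤ k → k ≤ h → ∀ y, l1 (y - x) ≤ h - k → (k : ℤ) ≤ gpre u (P k y) y := by
    intro k
    induction k with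
    | zero => omega
    | succ k ih =>
      intro _ hk y hy
      obtain ⟨hm1, hmn, hu⟩ := hP1 (k+1) y (by omega) hk hy
      have hnbz : ∀ z, z - y ∈ nbr0 d → l1 (z - x) ≤ h - k →
          (k : ℤ) ≤ gpre u (P (k+1) y - 1) z := by
        intro z hz hlz
        rcases Nat.eq_zero_or_pos k with rfl | hk1
        · simp only [Nat.cast_zero]
          exact gpre_nonneg u _ z
        · have hlt := hP2 (k+1) y z (by omega) hk hy hz
          have hlt' : P k z < P (k+1) y := by simpa using hlt
          have hiz := ih hk1 (by omega) z hlz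
          exact hiz.trans (gpre_mono u (by omega) z)
      apply reach_step u hm1 hmn hu
      · have hself : y - y ∈ nbr0 d := by
          right
          simp
        have := hnbz y hself (hy.trans (by omega))
        push_cast
        linarith
      · intro e he
        have hz : (y + e) - y ∈ nbr0 d := by
          have hye : y + e - y = e := by ring
          rw [hye]
          exact Or.inl he
        have hlz : l1 (y + e - x) ≤ h - k := by
          have h1 : y + e - x = (y - x) + e := by ring
          rw [h1]
          have h2 := l1_add_le (y - x) e
          rw [l1_nbr he] at h2
          omega
        have := hnbz (y + e) hz hlz
        push_cast
        linarith
  have hfin := main h hh (le_refl h) x (by simp [sub_self, l1_zero])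
  obtain ⟨-, hPn, -⟩ := hP1 h x hh (le_refl h) (by simp [sub_self, l1_zero])
  have hmono := gpre_mono u hPn x
  have hgl : gpre u u.length x = RSOS u (fun _ => 0) x := by
    unfold gpre
    rw [List.take_length]
  linarith

/-- The first time the height at `y` reaches `k`, if ever (else 0). -/
def firstReach (u : List (Fin d → ℤ)) (k : ℕ) (y : Fin d → ℤ) : ℕ :=
  if hr : ∃ m, (k : ℤ) ≤ gpre u m y then Nat.find hr else 0

lemma firstReach_bundle (u : List (Fin d → ℤ)) {k : ℕ} {y : Fin d → ℤ}
    (hk : 1 ≤ k) (hr : ∃ m, (k : ℤ) ≤ gpre u m y) :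
    1 ≤ firstReach u k y ∧ firstReach u k y ≤ u.length ∧
    u.getD (firstReach u k y - 1) 0 = y ∧
    gpre u (firstReach u k y - 1) y = (k : ℤ) - 1 ∧
    (∀ e ∈ nbr d, (k : ℤ) - 1 ≤ gpre u (firstReach u k y - 1) (y + e)) := by
  have hfr : firstReach u k y = Nat.find hr := by rw [firstReach, dif_pos hr]
  rw [hfr]
  set T := Nat.find hr with hT
  have hspec : (k : ℤ) ≤ gpre u T y := Nat.find_spec hr
  have hT1 : 1 ≤ T := by
    by_contra hc
    push_neg at hc
    interval_cases T
    rw [gpre_zero] at hspec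
    omega
  have hprev : gpre u (T-1) y < (k : ℤ) := by
    have := Nat.find_min hr (m := T - 1) (by omega)
    linarith [lt_of_not_ge this]
  have hbound : gpre u T y ≤ gpre u (T-1) y + 1 := by
    have := gpre_succ_le u (T-1) y
    rwa [Nat.sub_add_cancel hT1] at this
  have heqT : gpre u T y = (k : ℤ) := le_antisymm (by linarith) hspec
  have heqprev : gpre u (T-1) y = (k : ℤ) - 1 := by linarith
  have hlen : T - 1 < u.length := by
    by_contra hc
    push_neg at hc
    have h1 : gpre u T y = gpre u (T-1) y := by
      rw [gpre_stable u hc, gpre_stable u (by omega : u.length ≤ T)]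
    rw [heqT, heqprev] at h1
    omega
  have hstep : gpre u T = rsosStep (gpre u (T-1)) (u.getD (T-1) 0) := by
    have := gpre_succ_lt u hlen
    rwa [Nat.sub_add_cancel hT1] at this
  have hne : rsosStep (gpre u (T-1)) (u.getD (T-1) 0) y ≠ gpre u (T-1) y := by
    rw [← hstep, heqT, heqprev]
    omega
  obtain ⟨hyc, hcond, -⟩ := rsosStep_ne _ _ _ hne
  refine ⟨hT1, by omega, hyc.symm, heqprev, ?_⟩
  intro e he
  have := hcond e he
  rw [← hyc] at this
  linarith [heqprev ▸ this]

lemma exists_pyramid (u : List (Fin d → ℤ)) (x : Fin d → ℤ) {h : ℕ}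
    (hh : (h : ℤ) ≤ RSOS u (fun _ => 0) x) :
    ∃ P : ℕ → (Fin d → ℤ) → ℕ, IsPyramid u x h P := by
  have hgl : gpre u u.length x = RSOS u (fun _ => 0) x := by
    unfold gpre
    rw [List.take_length]
  have hreach : ∀ k (y : Fin d → ℤ), 1 ≤ k → k ≤ h → l1 (y - x) ≤ h - k →
      ∃ m, (k : ℤ) ≤ gpre u m y := by
    intro k y hk1 hkh hl
    refine ⟨u.length, ?_⟩
    have hL := gpre_l1 u u.length (l1 (y - x)) (y - x) rfl x
    have hx : x + (y - x) = y := by ring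
    rw [hx] at hL
    have hcast : (l1 (y - x) : ℤ) ≤ (h : ℤ) - (k : ℤ) := by
      have h1 : (l1 (y - x) : ℤ) ≤ ((h - k : ℕ) : ℤ) := by exact_mod_cast hl
      push_cast [Nat.cast_sub hkh] at h1 ⊢
      linarith
    linarith [hgl ▸ hh]
  refine ⟨fun k y => firstReach u k y, ?_, ?_⟩
  · intro k y hk1 hkh hl
    obtain ⟨b1, b2, b3, -, -⟩ := firstReach_bundle u hk1 (hreach k y hk1 hkh hl)
    exact ⟨b1, b2, b3⟩
  · intro k y z hk2 hkh hl hz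
    have hky := hreach k y (by omega) hkh hl
    obtain ⟨hT1, hTn, hu, hprev, hnbs⟩ := firstReach_bundle u (by omega) hky
    have hz' : ((k - 1 : ℕ) : ℤ) ≤ gpre u (firstReach u k y - 1) z := by
      have hcast : ((k - 1 : ℕ) : ℤ) = (k : ℤ) - 1 := by
        push_cast [Nat.cast_sub (by omega : 1 ≤ k)]
        ring
      rw [hcast]
      rcases hz with he | h0
      · have hze : z = y + (z - y) := by ring
        rw [hze]
        exact hnbs (z - y) he
      · have hzy : z = y := sub_eq_zero.mp h0
        rw [hzy, hprev]
    have hrz : ∃ m, ((k - 1 : ℕ) : ℤ) ≤ gpre u m z := ⟨firstReach u k y - 1, hz'⟩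
    have hle : firstReach u (k-1) z ≤ firstReach u k y - 1 := by
      rw [firstReach, dif_pos hrz]
      exact Nat.find_le hz'
    show firstReach u (k-1) z < firstReach u k y
    omega

end RSOSAux

/-- pyramid characterization of RSOS height: the RSOS height at `x`
started from the zero initial condition equals the largest `h ≥ 0` such that `h = 0`
or there is a pyramid of height `h` centered at `x` within `u`. -/
theorem rsos_eq_max_pyramid {d : ℕ} (hd : 1 ≤ d) (u : List (Fin d → ℤ))
    (x : Fin d → ℤ) :
    RSOS u (fun _ => 0) x =
      ((sSup {h : ℕ | h = 0 ∨ ∃ P : ℕ → (Fin d → ℤ) → ℕ, IsPyramid u x h P} : ℕ) : ℤ) := by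
  set S := {h : ℕ | h = 0 ∨ ∃ P : ℕ → (Fin d → ℤ) → ℕ, IsPyramid u x h P} with hS
  have h0S : 0 ∈ S := Or.inl rfl
  have hfnn : 0 ≤ RSOS u (fun _ => 0) x := by
    have h1 := RSOSAux.gpre_nonneg u u.length x
    unfold RSOSAux.gpre at h1
    rwa [List.take_length] at h1
  have hub : ∀ k ∈ S, k ≤ (RSOS u (fun _ => 0) x).toNat := by
    intro k hk
    rcases hk with rfl | ⟨P, hP⟩
    · omega
    · rcases Nat.eq_zero_or_pos k with rfl | hpos
      · omega
      · have := RSOSAux.pyramid_le u x k P hP hpos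
        omega
  have h1 : sSup S ≤ (RSOS u (fun _ => 0) x).toNat := csSup_le ⟨0, h0S⟩ hub
  have h2 : (RSOS u (fun _ => 0) x).toNat ∈ S := by
    rcases Nat.eq_zero_or_pos (RSOS u (fun _ => 0) x).toNat with hz | hp
    · exact Or.inl hz
    · refine Or.inr (RSOSAux.exists_pyramid u x ?_)
      omega
  have h3 : (RSOS u (fun _ => 0) x).toNat ≤ sSup S := le_csSup ⟨_, hub⟩ h2
  have h4 : sSup S = (RSOS u (fun _ => 0) x).toNat := le_antisymm h1 h3
  rw [h4]
  omega

end
end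

section
/- (Dual pyramid characterization.) Let u = (u_1, …, u_n) be an update list and let H₁ : ℤ^d → ℤ be the well initial condition H₁(y) = ‖y‖₁. Then the minimum over y ∈ ℤ^d of RSOS(u, H₁)(y) (which exists, since RSOS(u, H₁)(y) = ‖y‖₁ for all but finitely many y and RSOS(u, H₁) ≥ 0) equals the largest integer h ≥ 0 such that either h = 0, or there exists a pyramid of height h centered at 0 within the reversed list u^R = (u_n, …, u_1). -/
open Classical MeasureTheory

noncomputable section

namespace Aux

variable {d : ℕ}


lemma nbr_neg {e : Fin d → ℤ} (he : e ∈ nbr d) : -e ∈ nbr d := by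
  obtain ⟨i, h | h⟩ := he
  · exact ⟨i, Or.inr (by rw [h, ← Pi.single_neg])⟩
  · exact ⟨i, Or.inl (by rw [h, ← Pi.single_neg]; norm_num)⟩

lemma l1_single (y : Fin d → ℤ) (i : Fin d) (c : ℤ) (hc : c.natAbs = 1) :
    l1 (y + Pi.single i c) ≤ l1 y + 1 := by
  set v : Fin d → ℤ := y + Pi.single i c with hv
  unfold l1
  have key : ∀ j, (v j).natAbs ≤ (y j).natAbs + (if j = i then 1 else 0) := by
    intro j
    by_cases hj : j = i
    · subst hj; simp [hv, Pi.single_apply]; omega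
    · simp [hv, Pi.single_apply, hj]
  calc ∑ j, (v j).natAbs
      ≤ ∑ j, ((y j).natAbs + if j = i then 1 else 0) := Finset.sum_le_sum fun j _ => key j
    _ = (∑ j, (y j).natAbs) + 1 := by rw [Finset.sum_add_distrib]; simp

lemma l1_add_nbr (y e : Fin d → ℤ) (he : e ∈ nbr d) : l1 (y + e) ≤ l1 y + 1 := by
  obtain ⟨i, h | h⟩ := he <;> subst h
  · exact l1_single y i 1 rfl
  · exact l1_single y i (-1) rfl

lemma rsosStep_le (f : (Fin d → ℤ) → ℤ) (x y : Fin d → ℤ) : f y ≤ rsosStep f x y := by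
  unfold rsosStep
  split
  · next h => rw [h.1]; omega
  · exact le_refl _

lemma le_RSOS (u : List (Fin d → ℤ)) (H : (Fin d → ℤ) → ℤ) (y : Fin d → ℤ) :
    H y ≤ RSOS u H y := by
  induction u generalizing H with
  | nil => exact le_refl _
  | cons a u ih => exact le_trans (rsosStep_le H a y) (ih (rsosStep H a))

lemma RSOS_append (a b : List (Fin d → ℤ)) (H : (Fin d → ℤ) → ℤ) :
    RSOS (a ++ b) H = RSOS b (RSOS a H) := List.foldl_append

lemma RSOS_take_succ (u : List (Fin d → ℤ)) (H : (Fin d → ℤ) → ℤ) {t : ℕ} (ht : t < u.length) :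
    RSOS (u.take (t+1)) H = rsosStep (RSOS (u.take t) H) (u.getD t 0) := by
  have : u.take (t+1) = u.take t ++ [u.getD t 0] := by
    rw [List.take_succ, List.getElem?_eq_getElem ht, List.getD_eq_getElem _ _ ht]; rfl
  rw [this, RSOS_append]; rfl

lemma RSOS_take_mono (u : List (Fin d → ℤ)) (H : (Fin d → ℤ) → ℤ) {s t : ℕ} (hst : s ≤ t)
    (y : Fin d → ℤ) : RSOS (u.take s) H y ≤ RSOS (u.take t) H y := by
  conv_rhs => rw [← List.take_append_drop s (u.take t)]
  rw [RSOS_append, List.take_take, min_eq_left hst]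
  exact le_RSOS _ _ y

lemma forced (f : (Fin d → ℤ) → ℤ) (x : Fin d → ℤ) (m : ℤ) (hx : m ≤ f x)
    (hn : ∀ e ∈ nbr d, m ≤ f (x + e)) : m + 1 ≤ rsosStep f x x := by
  unfold rsosStep
  split
  · next h => omega
  · next h =>
    push_neg at h
    obtain ⟨e, he, hlt⟩ := h rfl
    have := hn e he
    omega

lemma reverse_getD (u : List (Fin d → ℤ)) {i : ℕ} (h : i < u.length) :
    u.reverse.getD i 0 = u.getD (u.length - 1 - i) 0 := by
  rw [List.getD_eq_getElem _ _ (by simpa using h), List.getD_eq_getElem _ _ (by omega)]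
  simp [List.getElem_reverse]



lemma pyramid_claim (u : List (Fin d → ℤ)) (h : ℕ) (P : ℕ → (Fin d → ℤ) → ℕ)
    (hP : IsPyramid u.reverse 0 h P) :
    ∀ j, j < h → ∀ y : Fin d → ℤ, l1 y ≤ j →
      (j : ℤ) + 1 ≤ RSOS (u.take (u.length - P (h - j) y + 1)) (fun v => (l1 v : ℤ)) y := by
  intro j
  induction j using Nat.strong_induction_on with
  | _ j ih =>
  intro hj y hy
  have hrevlen : u.reverse.length = u.length := List.length_reverse
  obtain ⟨hP1, hP2, hPy⟩ := hP.1 (h - j) y (by omega) (by omega) (by rw [sub_zero]; omega)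
  rw [hrevlen] at hP2
  set n := u.length with hn
  set p := P (h - j) y with hp
  have htn : n - p < n := by omega
  have hx : u.getD (n - p) 0 = y := by
    rw [← hPy, reverse_getD u (show p - 1 < u.length by omega)]
    congr 1; omega
  rw [RSOS_take_succ u _ htn, hx]
  have hboundself : (j : ℤ) ≤ RSOS (u.take (n - p)) (fun v => (l1 v : ℤ)) y := by
    by_cases hcase : j ≤ l1 y
    · calc (j : ℤ) ≤ (l1 y : ℤ) := by exact_mod_cast hcase
        _ ≤ _ := le_RSOS _ _ y
    · have hj1 : 1 ≤ j := by omega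
      have hih := ih (j-1) (by omega) (by omega) y (by omega)
      rw [show h - (j - 1) = (h - j) + 1 by omega] at hih
      have hord := hP.2 ((h-j)+1) y y (by omega) (by omega)
        (by rw [sub_zero]; omega) (by rw [sub_self]; exact Or.inr rfl)
      simp only [Nat.add_sub_cancel] at hord
      obtain ⟨hQ1, hQ2, -⟩ := hP.1 ((h-j)+1) y (by omega) (by omega) (by rw [sub_zero]; omega)
      rw [hrevlen] at hQ2
      have hle : n - P ((h-j)+1) y + 1 ≤ n - p := by omega
      have hcast : ((j-1 : ℕ) : ℤ) + 1 = (j : ℤ) := by omega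
      rw [hcast] at hih
      exact le_trans hih (RSOS_take_mono u _ hle y)
  refine forced _ _ _ hboundself ?_
  intro e he
  by_cases hcase : j ≤ l1 (y + e)
  · calc (j : ℤ) ≤ (l1 (y+e) : ℤ) := by exact_mod_cast hcase
      _ ≤ _ := le_RSOS _ _ (y+e)
  · have hj1 : 1 ≤ j := by omega
    have hih := ih (j-1) (by omega) (by omega) (y+e) (by omega)
    rw [show h - (j - 1) = (h - j) + 1 by omega] at hih
    have hord := hP.2 ((h-j)+1) (y+e) y (by omega) (by omega)
      (by rw [sub_zero]; omega) (by rw [show y - (y + e) = -e by abel]; exact Or.inl (nbr_neg he))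
    simp only [Nat.add_sub_cancel] at hord
    obtain ⟨hQ1, hQ2, -⟩ := hP.1 ((h-j)+1) (y+e) (by omega) (by omega) (by rw [sub_zero]; omega)
    rw [hrevlen] at hQ2
    have hle : n - P ((h-j)+1) (y+e) + 1 ≤ n - p := by omega
    have hcast : ((j-1 : ℕ) : ℤ) + 1 = (j : ℤ) := by omega
    rw [hcast] at hih
    exact le_trans hih (RSOS_take_mono u _ hle (y+e))

lemma pyramid_le (u : List (Fin d → ℤ)) (h : ℕ) (P : ℕ → (Fin d → ℤ) → ℕ)
    (hP : IsPyramid u.reverse 0 h P) (y : Fin d → ℤ) :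
    (h : ℤ) ≤ RSOS u (fun v => (l1 v : ℤ)) y := by
  by_cases hcase : h ≤ l1 y
  · calc (h : ℤ) ≤ (l1 y : ℤ) := by exact_mod_cast hcase
      _ ≤ _ := le_RSOS _ _ y
  · have hh1 : 1 ≤ h := by omega
    have hc := pyramid_claim u h P hP (h-1) (by omega) y (by omega)
    rw [show h - (h-1) = 1 by omega] at hc
    have hcast : ((h-1 : ℕ) : ℤ) + 1 = (h : ℤ) := by omega
    rw [hcast] at hc
    obtain ⟨hQ1, hQ2, -⟩ := hP.1 1 y (le_refl _) hh1 (by rw [sub_zero]; omega)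
    rw [List.length_reverse] at hQ2
    calc (h:ℤ) ≤ RSOS (u.take (u.length - P 1 y + 1)) (fun v => (l1 v : ℤ)) y := hc
      _ ≤ RSOS (u.take u.length) (fun v => (l1 v : ℤ)) y := RSOS_take_mono u _ (by omega) y
      _ = RSOS u (fun v => (l1 v : ℤ)) y := by rw [List.take_length]



/-- The first time the height at `y` reaches level `M + 1 - k`. -/
def qt (u : List (Fin d → ℤ)) (M k : ℕ) (y : Fin d → ℤ) : ℕ :=
  sInf {t : ℕ | (M : ℤ) + 1 - k ≤ RSOS (u.take t) (fun v => (l1 v : ℤ)) y}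

lemma qt_props (u : List (Fin d → ℤ)) (M : ℕ)
    (hmin : ∀ y : Fin d → ℤ, (M : ℤ) ≤ RSOS u (fun v => (l1 v : ℤ)) y)
    {k : ℕ} {y : Fin d → ℤ} (hk1 : 1 ≤ k) (hkM : k ≤ M) (hy : l1 y ≤ M - k) :
    1 ≤ qt u M k y ∧ qt u M k y ≤ u.length ∧
    u.getD (qt u M k y - 1) 0 = y ∧
    RSOS (u.take (qt u M k y - 1)) (fun v => (l1 v : ℤ)) y = (M : ℤ) - k ∧
    RSOS (u.take (qt u M k y)) (fun v => (l1 v : ℤ)) y = (M : ℤ) + 1 - k ∧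
    (∀ e ∈ nbr d, RSOS (u.take (qt u M k y - 1)) (fun v => (l1 v : ℤ)) y ≤
      RSOS (u.take (qt u M k y - 1)) (fun v => (l1 v : ℤ)) (y + e)) := by
  set W : (Fin d → ℤ) → ℤ := fun v => (l1 v : ℤ) with hW
  set S : Set ℕ := {t : ℕ | (M : ℤ) + 1 - k ≤ RSOS (u.take t) W y} with hS
  have hnmem : u.length ∈ S := by
    show (M : ℤ) + 1 - k ≤ RSOS (u.take u.length) W y
    rw [List.take_length]
    have := hmin y
    omega
  set q := qt u M k y with hq
  have hqS : q ∈ S := Nat.sInf_mem ⟨u.length, hnmem⟩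
  have hqn : q ≤ u.length := Nat.sInf_le hnmem
  have h0 : 0 ∉ S := by
    show ¬ ((M : ℤ) + 1 - k ≤ RSOS (u.take 0) W y)
    simp only [List.take_zero]
    show ¬ ((M : ℤ) + 1 - k ≤ (l1 y : ℤ))
    have : (l1 y : ℤ) ≤ (M : ℤ) - k := by
      have h1 : ((M - k : ℕ) : ℤ) = (M : ℤ) - k := by omega
      have h2 : (l1 y : ℤ) ≤ ((M - k : ℕ) : ℤ) := by exact_mod_cast hy
      omega
    omega
  have hq1 : 1 ≤ q := by
    rcases Nat.eq_zero_or_pos q with h | h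
    · exact absurd (h ▸ hqS) h0
    · exact h
  have hqdef : q = sInf S := rfl
  have hq' : q - 1 ∉ S := by
    intro hmem
    have := Nat.sInf_le hmem
    omega
  have hlt : RSOS (u.take (q-1)) W y < (M : ℤ) + 1 - k := by
    by_contra hcon
    exact hq' (by push_neg at hcon; exact hcon)
  have hstep : RSOS (u.take q) W = rsosStep (RSOS (u.take (q-1)) W) (u.getD (q-1) 0) := by
    have := RSOS_take_succ u W (show q - 1 < u.length by omega)
    rwa [show q - 1 + 1 = q by omega] at this
  have hgeq : (M : ℤ) + 1 - k ≤ RSOS (u.take q) W y := hqS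
  -- analyze the step
  rw [hstep] at hgeq
  unfold rsosStep at hgeq
  by_cases hcond : y = u.getD (q-1) 0 ∧ ∀ e ∈ nbr d,
      RSOS (u.take (q-1)) W (u.getD (q-1) 0) ≤ RSOS (u.take (q-1)) W (u.getD (q-1) 0 + e)
  · rw [if_pos hcond] at hgeq
    obtain ⟨hxy, hacc⟩ := hcond
    rw [← hxy] at hgeq hacc
    refine ⟨hq1, hqn, hxy.symm, by omega, ?_, hacc⟩
    rw [hstep]
    unfold rsosStep
    rw [← hxy, if_pos ⟨rfl, hacc⟩]
    omega
  · rw [if_neg hcond] at hgeq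
    omega



lemma exists_pyramid (u : List (Fin d → ℤ)) (M : ℕ)
    (hmin : ∀ y : Fin d → ℤ, (M : ℤ) ≤ RSOS u (fun v => (l1 v : ℤ)) y) :
    ∃ P : ℕ → (Fin d → ℤ) → ℕ, IsPyramid u.reverse 0 M P := by
  refine ⟨fun k y => u.length + 1 - qt u M k y, ?_, ?_⟩
  · intro k y hk1 hkM hy
    beta_reduce
    rw [sub_zero] at hy
    obtain ⟨hq1, hqn, hgd, -, -, -⟩ := qt_props u M hmin hk1 hkM hy
    refine ⟨by omega, by rw [List.length_reverse]; omega, ?_⟩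
    rw [reverse_getD u (show u.length + 1 - qt u M k y - 1 < u.length by omega),
      show u.length - 1 - (u.length + 1 - qt u M k y - 1) = qt u M k y - 1 by omega]
    exact hgd
  · intro k y z h2k hkM hy hz
    beta_reduce
    rw [sub_zero] at hy
    obtain ⟨hq1, hqn, -, hval, hval', -⟩ := qt_props u M hmin (by omega) (by omega) hy
    have hkey : qt u M k y < qt u M (k-1) z := by
      rcases hz with he | h0
      · -- z - y is a neighbor vector
        have hz1 : l1 z ≤ M - (k-1) := by
          have h1 : z = y + (z - y) := by abel
          have h2 := l1_add_nbr y (z - y) he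
          rw [← h1] at h2
          omega
        obtain ⟨hr1, hrn, -, hrval, hrval', hracc⟩ :=
          qt_props u M hmin (show 1 ≤ k-1 by omega) (by omega) hz1
        have hacc := hracc (-(z - y)) (nbr_neg he)
        rw [show z + -(z - y) = y by abel] at hacc
        rw [hrval] at hacc
        have hmem : (M : ℤ) + 1 - k ≤
            RSOS (u.take (qt u M (k-1) z - 1)) (fun v => (l1 v : ℤ)) y := by
          have hcast : ((k-1 : ℕ) : ℤ) = (k : ℤ) - 1 := by omega
          rw [hcast] at hacc
          omega
        have hle : qt u M k y ≤ qt u M (k-1) z - 1 := Nat.sInf_le hmem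
        omega
      · -- z = y
        have hzy : z = y := by
          have := Set.mem_singleton_iff.mp h0
          have h2 : z - y + y = 0 + y := by rw [this]
          simpa using h2
        subst hzy
        have hz1 : l1 z ≤ M - (k-1) := by omega
        obtain ⟨hr1, hrn, -, hrval, hrval', -⟩ :=
          qt_props u M hmin (show 1 ≤ k-1 by omega) (by omega) hz1
        have hmem : (M : ℤ) + 1 - k ≤
            RSOS (u.take (qt u M (k-1) z)) (fun v => (l1 v : ℤ)) z := by
          rw [hrval']
          have hcast : ((k-1 : ℕ) : ℤ) = (k : ℤ) - 1 := by omega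
          omega
        have hle : qt u M k z ≤ qt u M (k-1) z := Nat.sInf_le hmem
        have hne : qt u M k z ≠ qt u M (k-1) z := by
          intro heq
          rw [heq, hrval'] at hval'
          have hcast : ((k-1 : ℕ) : ℤ) = (k : ℤ) - 1 := by omega
          omega
        omega
    have hb1 : qt u M (k-1) z ≤ u.length := by
      rcases hz with he | h0
      · have hz1 : l1 z ≤ M - (k-1) := by
          have h1 : z = y + (z - y) := by abel
          have h2 := l1_add_nbr y (z - y) he
          rw [← h1] at h2
          omega
        exact (qt_props u M hmin (show 1 ≤ k-1 by omega) (by omega) hz1).2.1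
      · have hzy : z = y := by
          have := Set.mem_singleton_iff.mp h0
          have h2 : z - y + y = 0 + y := by rw [this]
          simpa using h2
        subst hzy
        exact (qt_props u M hmin (show 1 ≤ k-1 by omega) (by omega) (by omega)).2.1
    omega


end Aux

/-- dual pyramid characterization: for the well initial condition
`H₁ y = ‖y‖₁`, the minimum over `y` of the RSOS height (which is attained) equals the
largest `h ≥ 0` such that `h = 0` or there is a pyramid of height `h` centered at `0`
within the reversed update list. -/
theorem dual_rsos_min_eq_max_reverse_pyramid {d : ℕ} (hd : 1 ≤ d)
    (u : List (Fin d → ℤ)) :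
    sInf (Set.range (RSOS u fun y => (l1 y : ℤ))) =
      ((sSup {h : ℕ | h = 0 ∨ ∃ P : ℕ → (Fin d → ℤ) → ℕ, IsPyramid u.reverse 0 h P} : ℕ) : ℤ) := by
  have hlb : ∀ y : Fin d → ℤ, (0:ℤ) ≤ RSOS u (fun v => (l1 v : ℤ)) y :=
    fun y => le_trans (Int.natCast_nonneg (l1 y)) (Aux.le_RSOS u _ y)
  have hne : (Set.range (RSOS u fun y => (l1 y : ℤ))).Nonempty := ⟨_, ⟨0, rfl⟩⟩
  have hbdd : BddBelow (Set.range (RSOS u fun y => (l1 y : ℤ))) :=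
    ⟨0, by rintro z ⟨y, rfl⟩; exact hlb y⟩
  set m := sInf (Set.range (RSOS u fun y => (l1 y : ℤ))) with hm
  have hm0 : 0 ≤ m := le_csInf hne (by rintro z ⟨y, rfl⟩; exact hlb y)
  have hm_le : ∀ y : Fin d → ℤ, m ≤ RSOS u (fun v => (l1 v : ℤ)) y :=
    fun y => csInf_le hbdd ⟨y, rfl⟩
  set M := m.toNat with hM
  have hMm : (M : ℤ) = m := Int.toNat_of_nonneg hm0
  set S := {h : ℕ | h = 0 ∨ ∃ P : ℕ → (Fin d → ℤ) → ℕ, IsPyramid u.reverse 0 h P} with hSdef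
  have h0S : 0 ∈ S := Or.inl rfl
  have hub : ∀ h ∈ S, h ≤ M := by
    rintro h (rfl | ⟨P, hP⟩)
    · exact Nat.zero_le M
    · have h1 : (h : ℤ) ≤ m := le_csInf hne
        (by rintro z ⟨y, rfl⟩; exact Aux.pyramid_le u h P hP y)
      omega
  have hMS : M ∈ S := Or.inr (Aux.exists_pyramid u M (fun y => by rw [hMm]; exact hm_le y))
  have hsup : sSup S = M := le_antisymm (csSup_le ⟨0, h0S⟩ hub) (le_csSup ⟨M, hub⟩ hMS)
  rw [hsup, hMm]


end
end

section
/- (The dual RSOS interface is an interval in one dimension.) Let d = 1 and let H₁ : ℤ → ℤ be the well initial condition H₁(y) = |y|. For any update list u, the interface S = {x ∈ ℤ : RSOS(u, H₁)(x) > |x|} is either empty or equal to the set of integers in an interval [l, r] with l ≤ 0 ≤ r; in particular, if S is nonempty then 0 ∈ S and S is order-convex (x, z ∈ S and x ≤ y ≤ z imply y ∈ S). -/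
open Classical

noncomputable section

/-- One RSOS update at site `x ∈ ℤ` (dimension one): the height at `x` increases by
one iff it is no larger than the heights at both neighbors `x + 1` and `x - 1`. -/
def rsosStep1 (f : ℤ → ℤ) (x : ℤ) : ℤ → ℤ :=
  fun y => if y = x ∧ f x ≤ f (x + 1) ∧ f x ≤ f (x - 1) then f x + 1 else f y

/-- One-dimensional RSOS heights after applying the update list `u` (in chronological
order) to the initial condition `H`. -/
def RSOS1 (u : List ℤ) (H : ℤ → ℤ) : ℤ → ℤ :=
  u.foldl rsosStep1 H

lemma rsosStep1_bounds (g : ℤ → ℤ) (a y : ℤ) :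
    g y ≤ rsosStep1 g a y ∧ rsosStep1 g a y ≤ g y + 1 := by
  unfold rsosStep1
  split_ifs with h
  · obtain ⟨rfl, -, -⟩ := h; omega
  · omega

lemma rsosStep1_ub (g : ℤ → ℤ)
    (hg : ∀ x, g (x + 1) ≤ g x + 1 ∧ g x ≤ g (x + 1) + 1) (a y : ℤ) :
    rsosStep1 g a y ≤ g (y + 1) + 1 ∧ rsosStep1 g a y ≤ g (y - 1) + 1 := by
  unfold rsosStep1
  split_ifs with h
  · obtain ⟨rfl, h1, h2⟩ := h; omega
  · have h1 := (hg y).2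
    have h2 := (hg (y - 1)).1
    have e : y - 1 + 1 = y := by ring
    rw [e] at h2
    omega

lemma rsosStep1_lip (g : ℤ → ℤ)
    (hg : ∀ x, g (x + 1) ≤ g x + 1 ∧ g x ≤ g (x + 1) + 1) (a x : ℤ) :
    rsosStep1 g a (x + 1) ≤ rsosStep1 g a x + 1 ∧
    rsosStep1 g a x ≤ rsosStep1 g a (x + 1) + 1 := by
  have h1 := rsosStep1_bounds g a x
  have h2 := rsosStep1_bounds g a (x + 1)
  have h3 := rsosStep1_ub g hg a x
  have h4 := rsosStep1_ub g hg a (x + 1)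
  have e : x + 1 - 1 = x := by ring
  rw [e] at h4
  omega

lemma RSOS1_mono (u : List ℤ) (g : ℤ → ℤ) (x : ℤ) :
    g x ≤ List.foldl rsosStep1 g u x := by
  induction u generalizing g with
  | nil => exact le_rfl
  | cons a t ih =>
    simp only [List.foldl_cons]
    exact le_trans (rsosStep1_bounds g a x).1 (ih (rsosStep1 g a))

lemma RSOS1_lip (u : List ℤ) (g : ℤ → ℤ)
    (hg : ∀ x, g (x + 1) ≤ g x + 1 ∧ g x ≤ g (x + 1) + 1) (x : ℤ) :
    List.foldl rsosStep1 g u (x + 1) ≤ List.foldl rsosStep1 g u x + 1 ∧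
    List.foldl rsosStep1 g u x ≤ List.foldl rsosStep1 g u (x + 1) + 1 := by
  induction u generalizing g with
  | nil => exact hg x
  | cons a t ih =>
    simp only [List.foldl_cons]
    exact ih (rsosStep1 g a) (rsosStep1_lip g hg a)

lemma RSOS1_off (u : List ℤ) (g : ℤ → ℤ) (x : ℤ) (hx : x ∉ u) :
    List.foldl rsosStep1 g u x = g x := by
  induction u generalizing g with
  | nil => rfl
  | cons a t ih =>
    simp only [List.mem_cons, not_or] at hx
    rw [List.foldl_cons, ih _ hx.2]
    unfold rsosStep1
    rw [if_neg (fun h => hx.1 h.1)]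

lemma abs_lip (x : ℤ) : |x + 1| ≤ |x| + 1 ∧ |x| ≤ |x + 1| + 1 := by
  have h0 : 0 ≤ |x| := abs_nonneg x
  have h1 : 0 ≤ |x + 1| := abs_nonneg (x + 1)
  rcases abs_choice x with h | h <;> rcases abs_choice (x + 1) with h' | h' <;>
    rw [h] at h0 ⊢ <;> rw [h'] at h1 ⊢ <;> omega

lemma toward0_pos (f : ℤ → ℤ)
    (hlip : ∀ x, f (x + 1) ≤ f x + 1) :
    ∀ n : ℕ, ∀ y : ℤ, 0 ≤ y → |y + (n : ℤ)| < f (y + (n : ℤ)) → |y| < f y := by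
  intro n
  induction n with
  | zero => intro y hy h; simpa using h
  | succ n ih =>
    intro y hy h
    apply ih y hy
    push_cast at h
    have e : y + ((n : ℤ) + 1) = y + (n : ℤ) + 1 := by ring
    rw [e] at h
    have h1 := hlip (y + (n : ℤ))
    have ha : |y + (n : ℤ)| = y + (n : ℤ) := abs_of_nonneg (by positivity)
    have hb : |y + (n : ℤ) + 1| = y + (n : ℤ) + 1 := abs_of_nonneg (by positivity)
    rw [ha]
    rw [hb] at h
    omega

lemma toward0_neg (f : ℤ → ℤ)
    (hlip : ∀ x, f x ≤ f (x + 1) + 1) :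
    ∀ n : ℕ, ∀ y : ℤ, y ≤ 0 → |y - (n : ℤ)| < f (y - (n : ℤ)) → |y| < f y := by
  intro n
  induction n with
  | zero => intro y hy h; simpa using h
  | succ n ih =>
    intro y hy h
    apply ih y hy
    push_cast at h
    have e : y - ((n : ℤ) + 1) = (y - (n : ℤ) - 1) := by ring
    rw [e] at h
    have h1 := hlip (y - (n : ℤ) - 1)
    have e2 : y - (n : ℤ) - 1 + 1 = y - (n : ℤ) := by ring
    rw [e2] at h1
    have hn : (0 : ℤ) ≤ (n : ℤ) := Int.natCast_nonneg n
    have ha : |y - (n : ℤ)| = -(y - (n : ℤ)) := abs_of_nonpos (by omega)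
    have hb : |y - (n : ℤ) - 1| = -(y - (n : ℤ) - 1) := abs_of_nonpos (by omega)
    rw [ha]
    rw [hb] at h
    omega

/-- the dual RSOS interface is an interval in one dimension: for the
well initial condition `H₁ y = |y|`, the interface
`S = {x : RSOS(u, H₁)(x) > |x|}` is either empty or equals the set of integers in an
interval `[l, r]` with `l ≤ 0 ≤ r`; in particular, if `S` is nonempty then `0 ∈ S`
and `S` is order-convex. -/
theorem dual_rsos_interface_interval (u : List ℤ) :
    ({x : ℤ | |x| < RSOS1 u (fun y => |y|) x} = ∅ ∨
      ∃ l r : ℤ, l ≤ 0 ∧ 0 ≤ r ∧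
        {x : ℤ | |x| < RSOS1 u (fun y => |y|) x} = Set.Icc l r) ∧
    ({x : ℤ | |x| < RSOS1 u (fun y => |y|) x}.Nonempty →
      (0 : ℤ) ∈ {x : ℤ | |x| < RSOS1 u (fun y => |y|) x} ∧
      ∀ x y z : ℤ, |x| < RSOS1 u (fun w => |w|) x → |z| < RSOS1 u (fun w => |w|) z →
        x ≤ y → y ≤ z → |y| < RSOS1 u (fun w => |w|) y) := by
  have hlipb := fun x => RSOS1_lip u (fun y => |y|) (fun x => abs_lip x) x
  have hoff : ∀ x : ℤ, x ∉ u → RSOS1 u (fun y => |y|) x = |x| :=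
    fun x hx => RSOS1_off u _ x hx
  have hpos := toward0_pos (RSOS1 u (fun y => |y|)) (fun x => (hlipb x).1)
  have hneg := toward0_neg (RSOS1 u (fun y => |y|)) (fun x => (hlipb x).2)
  -- segment closure towards 0
  have hseg : ∀ w : ℤ, |w| < RSOS1 u (fun y => |y|) w → ∀ y : ℤ,
      (0 ≤ y ∧ y ≤ w) ∨ (w ≤ y ∧ y ≤ 0) → |y| < RSOS1 u (fun y => |y|) y := by
    intro w hw y hy
    rcases hy with ⟨hy0, hyw⟩ | ⟨hwy, hy0⟩
    · refine hpos (w - y).toNat y hy0 ?_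
      have e : y + ((w - y).toNat : ℤ) = w := by omega
      rw [e]; exact hw
    · refine hneg (y - w).toNat y hy0 ?_
      have e : y - ((y - w).toNat : ℤ) = w := by omega
      rw [e]; exact hw
  -- convexity
  have hconv : ∀ x y z : ℤ, |x| < RSOS1 u (fun y => |y|) x →
      |z| < RSOS1 u (fun y => |y|) z → x ≤ y → y ≤ z →
      |y| < RSOS1 u (fun y => |y|) y := by
    intro x y z hx hz hxy hyz
    rcases le_or_gt 0 y with h0 | h0
    · exact hseg z hz y (Or.inl ⟨h0, hyz⟩)
    · exact hseg x hx y (Or.inr ⟨hxy, le_of_lt h0⟩)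
  -- membership in u
  have hmu : ∀ x : ℤ, |x| < RSOS1 u (fun y => |y|) x → x ∈ u := by
    intro x hx
    by_contra hxu
    rw [hoff x hxu] at hx
    exact lt_irrefl _ hx
  have hzero : {x : ℤ | |x| < RSOS1 u (fun y => |y|) x}.Nonempty →
      |(0:ℤ)| < RSOS1 u (fun y => |y|) 0 := by
    rintro ⟨w, hw⟩
    rcases le_or_gt 0 w with h | h
    · exact hseg w hw 0 (Or.inl ⟨le_rfl, h⟩)
    · exact hseg w hw 0 (Or.inr ⟨le_of_lt h, le_rfl⟩)
  constructor
  · by_cases hS : {x : ℤ | |x| < RSOS1 u (fun y => |y|) x} = ∅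
    · exact Or.inl hS
    · right
      have hne : {x : ℤ | |x| < RSOS1 u (fun y => |y|) x}.Nonempty :=
        Set.nonempty_iff_ne_empty.mpr hS
      set F : Finset ℤ := u.toFinset.filter (fun x => |x| < RSOS1 u (fun y => |y|) x)
        with hF
      have hmemF : ∀ x : ℤ, x ∈ F ↔ |x| < RSOS1 u (fun y => |y|) x := by
        intro x
        simp only [hF, Finset.mem_filter, List.mem_toFinset]
        constructor
        · exact fun h => h.2
        · exact fun h => ⟨hmu x h, h⟩
      have hFne : F.Nonempty := by
        obtain ⟨w, hw⟩ := hne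
        exact ⟨w, (hmemF w).mpr hw⟩
      refine ⟨F.min' hFne, F.max' hFne, ?_, ?_, ?_⟩
      · exact Finset.min'_le F 0 ((hmemF 0).mpr (hzero hne))
      · exact Finset.le_max' F 0 ((hmemF 0).mpr (hzero hne))
      · ext y
        simp only [Set.mem_setOf_eq, Set.mem_Icc]
        constructor
        · intro hy
          exact ⟨Finset.min'_le F y ((hmemF y).mpr hy),
            Finset.le_max' F y ((hmemF y).mpr hy)⟩
        · rintro ⟨h1, h2⟩
          exact hconv _ y _ ((hmemF _).mp (F.min'_mem hFne))
            ((hmemF _).mp (F.max'_mem hFne)) h1 h2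
  · intro hne
    exact ⟨hzero hne, hconv⟩

end
end

section
/- (Conditional variance lower bound for integer-valued increments.) Let (Ω, ℱ, P) be a probability space, 𝒢 ⊆ ℱ a sub-σ-algebra, g : Ω → ℤ a 𝒢-measurable random variable, and f : Ω → ℤ a square-integrable random variable with f ≥ g almost surely. Let p ∈ [0, 1] and let A ∈ 𝒢 be an event such that, almost everywhere on A, the conditional probability P(f = g | 𝒢) equals p (equivalently, P(f ≥ g + 1 | 𝒢) = 1 − p on A). Then the conditional variance satisfies E[(f − E[f | 𝒢])² | 𝒢] ≥ (1/4) · min(p, 1 − p) almost everywhere on A; consequently Var(f) ≥ (1/4) · min(p, 1 − p) · P(A). -/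
open MeasureTheory ProbabilityTheory

private lemma memℒp_two_condexp {Ω : Type*} {m mΩ : MeasurableSpace Ω} (hm : m ≤ mΩ)
    (μ : Measure Ω) [IsFiniteMeasure μ] {F : Ω → ℝ} (hF : MemLp F 2 μ) :
    MemLp (μ[F|m]) 2 μ := by
  have hFi : Integrable F μ := hF.integrable one_le_two
  have hc : MemLp (fun x => (condExpL2 ℝ ℝ hm (hF.toLp F) : Ω → ℝ) x) 2 μ :=
    Lp.memLp _
  refine hc.ae_eq ?_
  refine ae_eq_condExp_of_forall_setIntegral_eq hm hFi
    (fun s _ _ => (hc.integrable one_le_two).integrableOn) (fun s hs hμs => ?_)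
    (aestronglyMeasurable_condExpL2 hm _)
  rw [integral_condExpL2_eq hm (hF.toLp F) hs hμs.ne]
  exact setIntegral_congr_ae (hm s hs) (hF.coeFn_toLp.mono fun x hx _ => hx)

/-- conditional variance lower bound for integer-valued increments:
let `𝒢 = m` be a sub-σ-algebra, `g` an `m`-measurable integer random variable, `f` a
square-integrable integer random variable with `f ≥ g` a.s., and `A` an `m`-measurable
event on which `P(f = g | m) = p` a.e.  Then the conditional variance of `f` given `m`
is at least `(1/4) · min p (1 - p)` a.e. on `A`, and consequently
`Var f ≥ (1/4) · min p (1 - p) · P(A)`. -/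
theorem cond_var_lower_bound {Ω : Type*} {m mΩ : MeasurableSpace Ω} (hm : m ≤ mΩ)
    (μ : Measure Ω) [IsProbabilityMeasure μ]
    (g : Ω → ℤ) (hg : Measurable[m] g)
    (f : Ω → ℤ) (hf : MemLp (fun ω => (f ω : ℝ)) 2 μ)
    (hfg : ∀ᵐ ω ∂μ, g ω ≤ f ω)
    (p : ℝ) (hp0 : 0 ≤ p) (hp1 : p ≤ 1)
    (A : Set Ω) (hA : MeasurableSet[m] A)
    (hcond : ∀ᵐ ω ∂μ, ω ∈ A →
      (μ[{ω' | f ω' = g ω'}.indicator (fun _ => (1 : ℝ)) | m]) ω = p) :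
    (∀ᵐ ω ∂μ, ω ∈ A →
      (1 / 4 : ℝ) * min p (1 - p) ≤
        (μ[(fun ω' => ((f ω' : ℝ) - (μ[fun ω'' => (f ω'' : ℝ) | m]) ω') ^ 2) | m]) ω) ∧
    (1 / 4 : ℝ) * min p (1 - p) * (μ A).toReal ≤ variance (fun ω => (f ω : ℝ)) μ := by
  classical
  have hGm : Measurable[m] fun ω => (g ω : ℝ) := measurable_from_top.comp hg
  have hGΩ : Measurable fun ω => (g ω : ℝ) := hGm.mono hm le_rfl
  set Ieq : Ω → ℝ := {ω' | f ω' = g ω'}.indicator (fun _ => (1 : ℝ)) with hIeq_def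
  set Ige : Ω → ℝ := {ω' | g ω' + 1 ≤ f ω'}.indicator (fun _ => (1 : ℝ)) with hIge_def
  obtain ⟨F', hF'sm, hFF'⟩ := hf.aestronglyMeasurable
  -- a.e. measurable versions of the indicators
  have hIeq_ae : Ieq =ᵐ[μ] ({ω | F' ω = (g ω : ℝ)}.indicator fun _ => (1 : ℝ)) := by
    filter_upwards [hFF'] with ω hω
    by_cases h : f ω = g ω
    · have h' : F' ω = (g ω : ℝ) := by rw [← hω]; exact_mod_cast h
      simp [hIeq_def, Set.indicator_apply, h, h']
    · have h' : ¬ F' ω = (g ω : ℝ) := by rw [← hω]; exact_mod_cast h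
      simp [hIeq_def, Set.indicator_apply, h, h']
  have hIge_ae : Ige =ᵐ[μ] ({ω | (g ω : ℝ) + 1 ≤ F' ω}.indicator fun _ => (1 : ℝ)) := by
    filter_upwards [hFF'] with ω hω
    by_cases h : g ω + 1 ≤ f ω
    · have h' : (g ω : ℝ) + 1 ≤ F' ω := by rw [← hω]; exact_mod_cast h
      simp [hIge_def, Set.indicator_apply, h, h'] <;> omega
    · have h' : ¬ (g ω : ℝ) + 1 ≤ F' ω := by rw [← hω]; exact_mod_cast h
      simp [hIge_def, Set.indicator_apply, h, h'] <;> omega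
  have hIeq_meas : AEStronglyMeasurable Ieq μ := by
    refine AEStronglyMeasurable.congr ?_ hIeq_ae.symm
    exact (stronglyMeasurable_const.indicator
      (measurableSet_eq_fun hF'sm.measurable hGΩ)).aestronglyMeasurable
  have hIge_meas : AEStronglyMeasurable Ige μ := by
    refine AEStronglyMeasurable.congr ?_ hIge_ae.symm
    exact (stronglyMeasurable_const.indicator
      (measurableSet_le (hGΩ.add measurable_const) hF'sm.measurable)).aestronglyMeasurable
  have hIeq_int : Integrable Ieq μ := by
    refine Integrable.mono' (integrable_const (1 : ℝ)) hIeq_meas ?_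
    refine Filter.Eventually.of_forall fun ω => ?_
    simp only [hIeq_def, Set.indicator_apply]
    split <;> simp
  have hIge_int : Integrable Ige μ := by
    refine Integrable.mono' (integrable_const (1 : ℝ)) hIge_meas ?_
    refine Filter.Eventually.of_forall fun ω => ?_
    simp only [hIge_def, Set.indicator_apply]
    split <;> simp
  -- a.e., the two indicators sum to 1
  have hsum : Ige =ᵐ[μ] fun ω => 1 - Ieq ω := by
    filter_upwards [hfg] with ω hω
    by_cases h : f ω = g ω
    · have h2 : ¬ g ω + 1 ≤ f ω := by omega
      simp [hIeq_def, hIge_def, Set.indicator_apply, h, h2]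
    · have h2 : g ω + 1 ≤ f ω := by omega
      simp [hIeq_def, hIge_def, Set.indicator_apply, h, h2] <;> omega
  have e5 : μ[Ige|m] =ᵐ[μ] fun ω => 1 - (μ[Ieq|m]) ω := by
    refine (condExp_congr_ae hsum).trans ?_
    have h1 : (fun ω => (1 : ℝ) - Ieq ω) = (fun _ => (1 : ℝ)) - Ieq := rfl
    rw [h1]
    refine (condExp_sub (integrable_const (1 : ℝ)) hIeq_int m).trans ?_
    rw [condExp_const hm (1 : ℝ)]
    filter_upwards with ω
    simp
  have hmin1 : min p (1 - p) ≤ p := min_le_left _ _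
  have hmin2 : min p (1 - p) ≤ 1 - p := min_le_right _ _
  constructor
  · -- conditional part
    set c : Ω → ℝ := μ[fun ω'' => (f ω'' : ℝ)|m] with hc_def
    have hcsm : StronglyMeasurable[m] c := stronglyMeasurable_condExp
    have hc2 : MemLp c 2 μ := memℒp_two_condexp hm μ hf
    set B : Set Ω := {ω | c ω ≤ (g ω : ℝ) + 1 / 2} with hB_def
    have hBm : MeasurableSet[m] B :=
      measurableSet_le hcsm.measurable (hGm.add measurable_const)
    set R : Ω → ℝ := (1 / 4 : ℝ) • (B.indicator Ige + Bᶜ.indicator Ieq) with hR_def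
    have hXint : Integrable (B.indicator Ige + Bᶜ.indicator Ieq) μ :=
      (hIge_int.indicator (hm _ hBm)).add (hIeq_int.indicator (hm _ hBm.compl))
    have hRint : Integrable R μ := hXint.smul _
    have hsq_int : Integrable (fun ω => ((f ω : ℝ) - c ω) ^ 2) μ :=
      (hf.sub hc2).integrable_sq
    have hle : R ≤ᵐ[μ] fun ω => ((f ω : ℝ) - c ω) ^ 2 := by
      filter_upwards [hfg] with ω hω
      simp only [hR_def, Pi.smul_apply, Pi.add_apply, smul_eq_mul]
      by_cases hB : ω ∈ B
      · have hBc : ω ∉ Bᶜ := by simp [hB]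
        rw [Set.indicator_of_mem hB, Set.indicator_of_notMem hBc, add_zero]
        by_cases hge : g ω + 1 ≤ f ω
        · have h1 : Ige ω = 1 := by simp [hIge_def, Set.indicator_apply, hge] <;> omega
          have h2 : c ω ≤ (g ω : ℝ) + 1 / 2 := hB
          have h3 : (g ω : ℝ) + 1 ≤ (f ω : ℝ) := by exact_mod_cast hge
          rw [h1]
          nlinarith [sq_nonneg ((f ω : ℝ) - c ω - 1 / 2)]
        · have h1 : Ige ω = 0 := by simp [hIge_def, Set.indicator_apply, hge] <;> omega
          rw [h1, mul_zero]
          positivity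
      · have hBc : ω ∈ Bᶜ := Set.mem_compl hB
        rw [Set.indicator_of_notMem hB, Set.indicator_of_mem hBc, zero_add]
        have h2 : (g ω : ℝ) + 1 / 2 < c ω := lt_of_not_ge hB
        by_cases heq : f ω = g ω
        · have h1 : Ieq ω = 1 := by simp [hIeq_def, Set.indicator_apply, heq]
          have h3 : (f ω : ℝ) = (g ω : ℝ) := by exact_mod_cast heq
          rw [h1]
          nlinarith [sq_nonneg ((f ω : ℝ) - c ω + 1 / 2)]
        · have h1 : Ieq ω = 0 := by simp [hIeq_def, Set.indicator_apply, heq]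
          rw [h1, mul_zero]
          positivity
    have hcm := condExp_mono (m := m) hRint hsq_int hle
    have e1 : μ[R|m] =ᵐ[μ] (1 / 4 : ℝ) • μ[B.indicator Ige + Bᶜ.indicator Ieq|m] :=
      condExp_smul (m := m) _ _
    have e2 := condExp_add (m := m) (μ := μ) (hIge_int.indicator (hm _ hBm))
      (hIeq_int.indicator (hm _ hBm.compl))
    have e3 := condExp_indicator (m := m) (μ := μ) hIge_int hBm
    have e4 := condExp_indicator (m := m) (μ := μ) hIeq_int hBm.compl
    filter_upwards [hcm, e1, e2, e3, e4, e5, hcond] with ω h1 h2 h3 h4 h4' h5 h6 hAω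
    refine le_trans ?_ h1
    rw [h2]
    simp only [Pi.smul_apply, smul_eq_mul]
    rw [h3]
    simp only [Pi.add_apply]
    rw [h4, h4']
    by_cases hBω : ω ∈ B
    · have hBc : ω ∉ Bᶜ := by simp [hBω]
      rw [Set.indicator_of_mem hBω, Set.indicator_of_notMem hBc, add_zero, h5,
        h6 hAω]
      linarith
    · have hBc : ω ∈ Bᶜ := Set.mem_compl hBω
      rw [Set.indicator_of_notMem hBω, Set.indicator_of_mem hBc, zero_add, h6 hAω]
      linarith
  · -- variance part
    set EF : ℝ := ∫ ω, (f ω : ℝ) ∂μ with hEF_def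
    have hvar : variance (fun ω => (f ω : ℝ)) μ = ∫ ω, ((f ω : ℝ) - EF) ^ 2 ∂μ := by
      rw [variance_eq_integral hf.aestronglyMeasurable.aemeasurable]
    set B' : Set Ω := {ω | EF ≤ (g ω : ℝ) + 1 / 2} with hB'_def
    have hB'm : MeasurableSet[m] B' :=
      measurableSet_le measurable_const (hGm.add measurable_const)
    have hS1m : MeasurableSet[m] (A ∩ B') := hA.inter hB'm
    have hS2m : MeasurableSet[m] (A ∩ B'ᶜ) := hA.inter hB'm.compl
    set R2 : Ω → ℝ := fun ω =>
      (1 / 4 : ℝ) * ((A ∩ B').indicator Ige ω + (A ∩ B'ᶜ).indicator Ieq ω) with hR2_def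
    have hR2int : Integrable R2 μ :=
      ((hIge_int.indicator (hm _ hS1m)).add (hIeq_int.indicator (hm _ hS2m))).const_mul _
    have hsq2_int : Integrable (fun ω => ((f ω : ℝ) - EF) ^ 2) μ :=
      (hf.sub (memLp_const EF)).integrable_sq
    have hle2 : R2 ≤ᵐ[μ] fun ω => ((f ω : ℝ) - EF) ^ 2 := by
      filter_upwards [hfg] with ω hω
      simp only [hR2_def]
      by_cases h1 : ω ∈ A ∩ B'
      · have hBc : ω ∉ A ∩ B'ᶜ := fun h => h.2 h1.2
        rw [Set.indicator_of_mem h1, Set.indicator_of_notMem hBc, add_zero]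
        by_cases hge : g ω + 1 ≤ f ω
        · have hi : Ige ω = 1 := by simp [hIge_def, Set.indicator_apply, hge] <;> omega
          have h2 : EF ≤ (g ω : ℝ) + 1 / 2 := h1.2
          have h3 : (g ω : ℝ) + 1 ≤ (f ω : ℝ) := by exact_mod_cast hge
          rw [hi]
          nlinarith [sq_nonneg ((f ω : ℝ) - EF - 1 / 2)]
        · have hi : Ige ω = 0 := by simp [hIge_def, Set.indicator_apply, hge] <;> omega
          rw [hi, mul_zero]
          positivity
      · rw [Set.indicator_of_notMem h1, zero_add]
        by_cases h2 : ω ∈ A ∩ B'ᶜ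
        · rw [Set.indicator_of_mem h2]
          have h2' : (g ω : ℝ) + 1 / 2 < EF := lt_of_not_ge h2.2
          by_cases heq : f ω = g ω
          · have hi : Ieq ω = 1 := by simp [hIeq_def, Set.indicator_apply, heq]
            have h3 : (f ω : ℝ) = (g ω : ℝ) := by exact_mod_cast heq
            rw [hi]
            nlinarith [sq_nonneg ((f ω : ℝ) - EF + 1 / 2)]
          · have hi : Ieq ω = 0 := by simp [hIeq_def, Set.indicator_apply, heq]
            rw [hi, mul_zero]
            positivity
        · rw [Set.indicator_of_notMem h2, mul_zero]
          positivity
    have hIle := integral_mono_ae hR2int hsq2_int hle2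
    -- compute the integral of R2
    have hint1 : ∫ ω, (A ∩ B').indicator Ige ω ∂μ = (1 - p) * (μ (A ∩ B')).toReal := by
      rw [integral_indicator (hm _ hS1m), ← setIntegral_condExp hm hIge_int hS1m]
      have : ∫ ω in A ∩ B', (μ[Ige|m]) ω ∂μ = ∫ _ω in A ∩ B', (1 - p) ∂μ := by
        refine setIntegral_congr_ae (hm _ hS1m) ?_
        filter_upwards [e5, hcond] with ω h5 h6 hω
        rw [h5, h6 hω.1]
      rw [this, setIntegral_const, measureReal_def, smul_eq_mul, mul_comm]
    have hint2 : ∫ ω, (A ∩ B'ᶜ).indicator Ieq ω ∂μ = p * (μ (A ∩ B'ᶜ)).toReal := by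
      rw [integral_indicator (hm _ hS2m), ← setIntegral_condExp hm hIeq_int hS2m]
      have : ∫ ω in A ∩ B'ᶜ, (μ[Ieq|m]) ω ∂μ = ∫ _ω in A ∩ B'ᶜ, p ∂μ := by
        refine setIntegral_congr_ae (hm _ hS2m) ?_
        filter_upwards [hcond] with ω h6 hω
        exact h6 hω.1
      rw [this, setIntegral_const, measureReal_def, smul_eq_mul, mul_comm]
    have hR2val : ∫ ω, R2 ω ∂μ =
        (1 / 4 : ℝ) * ((1 - p) * (μ (A ∩ B')).toReal + p * (μ (A ∩ B'ᶜ)).toReal) := by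
      simp only [hR2_def]
      rw [integral_const_mul, integral_add (hIge_int.indicator (hm _ hS1m))
        (hIeq_int.indicator (hm _ hS2m)), hint1, hint2]
    have hmeasA : (μ A).toReal = (μ (A ∩ B')).toReal + (μ (A ∩ B'ᶜ)).toReal := by
      have h := measure_inter_add_diff A (hm _ hB'm) (μ := μ)
      rw [Set.diff_eq] at h
      rw [← h, ENNReal.toReal_add (measure_ne_top μ _) (measure_ne_top μ _)]
    have ht1 : (0 : ℝ) ≤ (μ (A ∩ B')).toReal := ENNReal.toReal_nonneg
    have ht2 : (0 : ℝ) ≤ (μ (A ∩ B'ᶜ)).toReal := ENNReal.toReal_nonneg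
    rw [hvar]
    refine le_trans ?_ hIle
    rw [hR2val, hmeasA]
    nlinarith
end
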